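/- arXiv:0708.3912 — 10 statements merged into one kernel-verified Lean document; each statement's English description precedes it below -/
import Mathlib

section
/- If ψ : Λ → Λ is a k-linear algebra homomorphism with ψ(x) = α₁x + α₂y and ψ(y) = β₁x + β₂y, then α₁α₂ = β₁β₂ = α₂β₁ = 0 in k. -/
/-- The relations defining the quantum exterior algebra
`Λ = k⟨x,y⟩/(x², xy+qyx, y²)`, where `x = ι 0` and `y = ι 1`. -/
inductive QRel (k : Type) [Field k] (q : k) :
    FreeAlgebra k (Fin 2) → FreeAlgebra k (Fin 2) → Prop
  | x2 : QRel k q (FreeAlgebra.ι k 0 * FreeAlgebra.ι k 0) 0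
  | xy : QRel k q
      (FreeAlgebra.ι k 0 * FreeAlgebra.ι k 1 +
        q • (FreeAlgebra.ι k 1 * FreeAlgebra.ι k 0)) 0
  | y2 : QRel k q (FreeAlgebra.ι k 1 * FreeAlgebra.ι k 1) 0

/-- The quantum exterior algebra `Λ`. -/
abbrev Lam (k : Type) [Field k] (q : k) := RingQuot (QRel k q)

/-- The image of `x` in `Λ`. -/
noncomputable def Xg (k : Type) [Field k] (q : k) : Lam k q :=
  RingQuot.mkAlgHom k (QRel k q) (FreeAlgebra.ι k 0)

/-- The image of `y` in `Λ`. -/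
noncomputable def Yg (k : Type) [Field k] (q : k) : Lam k q :=
  RingQuot.mkAlgHom k (QRel k q) (FreeAlgebra.ι k 1)

/-- Matrix model of `x` (left multiplication on the basis 1, x, y, yx). -/
def Xmat (k : Type) [Field k] (q : k) : Matrix (Fin 4) (Fin 4) k :=
  !![0,0,0,0; 1,0,0,0; 0,0,0,0; 0,0,-q,0]

/-- Matrix model of `y`. -/
def Ymat (k : Type) [Field k] (q : k) : Matrix (Fin 4) (Fin 4) k :=
  !![0,0,0,0; 0,0,0,0; 1,0,0,0; 0,1,0,0]

lemma XX (k : Type) [Field k] (q : k) : Xmat k q * Xmat k q = 0 := by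
  ext i j; fin_cases i <;> fin_cases j <;>
    simp [Xmat, Matrix.mul_apply, Fin.sum_univ_four]

lemma YY (k : Type) [Field k] (q : k) : Ymat k q * Ymat k q = 0 := by
  ext i j; fin_cases i <;> fin_cases j <;>
    simp [Ymat, Matrix.mul_apply, Fin.sum_univ_four]

lemma XYrel (k : Type) [Field k] (q : k) :
    Xmat k q * Ymat k q + q • (Ymat k q * Xmat k q) = 0 := by
  ext i j; fin_cases i <;> fin_cases j <;>
    simp [Xmat, Ymat, Matrix.mul_apply, Fin.sum_univ_four,
      Matrix.vecHead, Matrix.vecTail]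

lemma YXentry (k : Type) [Field k] (q : k) :
    (Ymat k q * Xmat k q) 3 0 = 1 := by
  simp [Xmat, Ymat, Matrix.mul_apply, Fin.sum_univ_four]

/-- The matrix representation of `Λ`. -/
noncomputable def Φ (k : Type) [Field k] (q : k) :
    Lam k q →ₐ[k] Matrix (Fin 4) (Fin 4) k :=
  RingQuot.liftAlgHom k (s := QRel k q)
    ⟨FreeAlgebra.lift k ![Xmat k q, Ymat k q], by
      rintro a b ⟨⟩ <;>
        simp [XX, YY, XYrel] ⟩

lemma ΦX (k : Type) [Field k] (q : k) : Φ k q (Xg k q) = Xmat k q := by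
  simp [Φ, Xg, RingQuot.liftAlgHom_mkAlgHom_apply]

lemma ΦY (k : Type) [Field k] (q : k) : Φ k q (Yg k q) = Ymat k q := by
  simp [Φ, Yg, RingQuot.liftAlgHom_mkAlgHom_apply]

lemma rel_x2 (k : Type) [Field k] (q : k) : Xg k q * Xg k q = 0 := by
  have := RingQuot.mkAlgHom_rel k (QRel.x2 (k := k) (q := q))
  simpa [Xg, map_mul] using this

lemma rel_y2 (k : Type) [Field k] (q : k) : Yg k q * Yg k q = 0 := by
  have := RingQuot.mkAlgHom_rel k (QRel.y2 (k := k) (q := q))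
  simpa [Yg, map_mul] using this

lemma rel_xy (k : Type) [Field k] (q : k) :
    Xg k q * Yg k q = -(q • (Yg k q * Xg k q)) := by
  have := RingQuot.mkAlgHom_rel k (QRel.xy (k := k) (q := q))
  simp only [map_add, map_mul, map_smul, map_zero] at this
  have h : Xg k q * Yg k q + q • (Yg k q * Xg k q) = 0 := this
  linear_combination (norm := module) h

lemma key1 (k : Type) [Field k] (q : k) (a b : k) :
    (a • Xg k q + b • Yg k q) * (a • Xg k q + b • Yg k q)
      = ((1 - q) * (a * b)) • (Yg k q * Xg k q) := by
  rw [mul_add, add_mul, add_mul, smul_mul_assoc, smul_mul_assoc,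
    smul_mul_assoc, smul_mul_assoc, mul_smul_comm, mul_smul_comm,
    mul_smul_comm, mul_smul_comm, rel_x2, rel_y2, rel_xy]
  module

lemma key2 (k : Type) [Field k] (q : k) (a b c d : k) :
    (a • Xg k q + b • Yg k q) * (c • Xg k q + d • Yg k q)
      + q • ((c • Xg k q + d • Yg k q) * (a • Xg k q + b • Yg k q))
      = ((1 - q ^ 2) * (b * c)) • (Yg k q * Xg k q) := by
  rw [mul_add, add_mul, add_mul, mul_add, add_mul, add_mul,
    smul_mul_assoc, smul_mul_assoc, smul_mul_assoc, smul_mul_assoc,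
    smul_mul_assoc, smul_mul_assoc, smul_mul_assoc, smul_mul_assoc,
    mul_smul_comm, mul_smul_comm, mul_smul_comm, mul_smul_comm,
    mul_smul_comm, mul_smul_comm, mul_smul_comm, mul_smul_comm,
    rel_x2, rel_y2, rel_xy]
  match_scalars <;> ring

lemma coeff_zero (k : Type) [Field k] (q : k) (c : k)
    (h : c • (Yg k q * Xg k q) = 0) : c = 0 := by
  have := congrArg (Φ k q) h
  simp only [map_smul, map_mul, map_zero, ΦX, ΦY] at this
  have := congrFun (congrFun (congrArg (·) this) 3) 0
  simpa [YXentry] using this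

/-- if `ψ : Λ → Λ` is a `k`-algebra homomorphism with
`ψ(x) = α₁x + α₂y` and `ψ(y) = β₁x + β₂y`, then `α₁α₂ = β₁β₂ = α₂β₁ = 0`. -/
theorem stmt4 (k : Type) [Field k] (q : k) (hq : q ≠ 0)
    (hq' : ∀ n : ℕ, 0 < n → q ^ n ≠ 1)
    (ψ : Lam k q →ₐ[k] Lam k q) (α₁ α₂ β₁ β₂ : k)
    (hx : ψ (Xg k q) = α₁ • Xg k q + α₂ • Yg k q)
    (hy : ψ (Yg k q) = β₁ • Xg k q + β₂ • Yg k q) :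
    α₁ * α₂ = 0 ∧ β₁ * β₂ = 0 ∧ α₂ * β₁ = 0 := by
  have hq1 : (1 : k) - q ≠ 0 :=
    sub_ne_zero.mpr fun h => hq' 1 one_pos (by rw [pow_one, ← h])
  have hq2 : (1 : k) - q ^ 2 ≠ 0 :=
    sub_ne_zero.mpr fun h => hq' 2 two_pos (by rw [← h])
  have h1 : ψ (Xg k q * Xg k q) = 0 := by rw [rel_x2, map_zero]
  rw [map_mul, hx, key1] at h1
  have e1 := coeff_zero k q _ h1
  have h2 : ψ (Yg k q * Yg k q) = 0 := by rw [rel_y2, map_zero]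
  rw [map_mul, hy, key1] at h2
  have e2 := coeff_zero k q _ h2
  have h3 : ψ (Xg k q * Yg k q) + q • ψ (Yg k q * Xg k q) = 0 := by
    rw [← map_smul, ← map_add]
    rw [show Xg k q * Yg k q + q • (Yg k q * Xg k q) = 0 by
      rw [rel_xy]; abel]
    exact map_zero ψ
  rw [map_mul, map_mul, hx, hy, key2] at h3
  have e3 := coeff_zero k q _ h3
  refine ⟨?_, ?_, ?_⟩
  · rcases mul_eq_zero.mp e1 with h | h
    · exact absurd h hq1
    · exact h
  · rcases mul_eq_zero.mp e2 with h | h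
    · exact absurd h hq1
    · exact h
  · rcases mul_eq_zero.mp e3 with h | h
    · exact absurd h hq2
    · exact h
end

section
/- Define f⁰₀ = 1, f¹₀ = x, f¹₁ = y in Λ (with fⁿ₋₁ = fⁿ_{n+1} = 0), and for n ≥ 2 define fⁿᵢ = f^{n−1}_{i−1} ⊗ y + qⁱ f^{n−1}ᵢ ⊗ x in Λ^{⊗n}. Let Pⁿ = ⊕_{i=0}^{n} Λ ⊗ k·fⁿᵢ ⊗ Λ with generators f̃ⁿᵢ, and δₙ : Pⁿ → P^{n−1} given by f̃ⁿᵢ ↦ [x f̃^{n−1}ᵢ + (−1)ⁿ qⁱ f̃^{n−1}ᵢ x] + [q^{n−i} y f̃^{n−1}_{i−1} + (−1)ⁿ f̃^{n−1}_{i−1} y]. Then δₙ ∘ δ_{n+1} = 0 for all n ≥ 1. -/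
open scoped TensorProduct

/-- The `n`-th term `Pⁿ = ⊕_{i=0}^{n} Λ ⊗ k·fⁿᵢ ⊗ Λ` of the bimodule resolution,
modelled as `(n+1)` copies of `Λ ⊗ Λ`, where `a ⊗ b` in the `i`-th copy
represents `a f̃ⁿᵢ b`. -/
abbrev Pmod (k : Type) [Field k] (q : k) (n : ℕ) :=
  Fin (n + 1) → Lam k q ⊗[k] Lam k q

/-- The differential `δ_{m+1} : P^{m+1} → P^m`,
`f̃ⁿᵢ ↦ [x f̃^{n−1}ᵢ + (−1)ⁿ qⁱ f̃^{n−1}ᵢ x] + [q^{n−i} y f̃^{n−1}_{i−1} + (−1)ⁿ f̃^{n−1}_{i−1} y]`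
(with `n = m+1`), extended as a map of `Λ`-bimodules. -/
noncomputable def deltaRes (k : Type) [Field k] (q : k) (m : ℕ) :
    Pmod k q (m + 1) →ₗ[k] Pmod k q m :=
  LinearMap.pi fun j : Fin (m + 1) =>
    ((TensorProduct.map (LinearMap.mulRight k (Xg k q)) LinearMap.id
        + ((-1 : k) ^ (m + 1) * q ^ (j : ℕ)) •
          TensorProduct.map LinearMap.id (LinearMap.mulLeft k (Xg k q))) ∘ₗ
      LinearMap.proj j.castSucc)
    + ((q ^ (m - (j : ℕ)) •
          TensorProduct.map (LinearMap.mulRight k (Yg k q)) LinearMap.id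
        + ((-1 : k) ^ (m + 1)) •
          TensorProduct.map LinearMap.id (LinearMap.mulLeft k (Yg k q))) ∘ₗ
      LinearMap.proj j.succ)


lemma auxA (k : Type) [Field k] (A : Type) [Ring A] [Algebra k A] (x : A) (hx : x * x = 0)
    (c c' : k) (hc : c + c' = 0) (z : A ⊗[k] A) :
    ((TensorProduct.map (LinearMap.mulRight k x) LinearMap.id
      + c • TensorProduct.map LinearMap.id (LinearMap.mulLeft k x) : A ⊗[k] A →ₗ[k] A ⊗[k] A))
    (((TensorProduct.map (LinearMap.mulRight k x) LinearMap.id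
      + c' • TensorProduct.map LinearMap.id (LinearMap.mulLeft k x) : A ⊗[k] A →ₗ[k] A ⊗[k] A)) z) = 0 := by
  induction z using TensorProduct.induction_on with
  | zero => simp
  | tmul a b =>
      have hxb : x * (x * b) = 0 := by rw [← mul_assoc, hx, zero_mul]
      have hax : a * x * x = 0 := by rw [mul_assoc, hx, mul_zero]
      simp only [LinearMap.add_apply, LinearMap.smul_apply, TensorProduct.map_tmul,
        LinearMap.mulRight_apply, LinearMap.mulLeft_apply, LinearMap.id_apply, map_add, map_smul,
        hax, hxb, TensorProduct.zero_tmul, TensorProduct.tmul_zero, smul_zero, add_zero, zero_add]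
      rw [← add_smul, hc, zero_smul]
  | add u v hu hv => simp only [map_add, hu, hv, add_zero]

lemma auxC (k : Type) [Field k] (A : Type) [Ring A] [Algebra k A] (y : A) (hy : y * y = 0)
    (d s s' : k) (hs : s + s' = 0) (z : A ⊗[k] A) :
    ((d • TensorProduct.map (LinearMap.mulRight k y) LinearMap.id
      + s • TensorProduct.map LinearMap.id (LinearMap.mulLeft k y) : A ⊗[k] A →ₗ[k] A ⊗[k] A))
    (((d • TensorProduct.map (LinearMap.mulRight k y) LinearMap.id
      + s' • TensorProduct.map LinearMap.id (LinearMap.mulLeft k y) : A ⊗[k] A →ₗ[k] A ⊗[k] A)) z) = 0 := by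
  induction z using TensorProduct.induction_on with
  | zero => simp
  | tmul a b =>
      have hyb : y * (y * b) = 0 := by rw [← mul_assoc, hy, zero_mul]
      have hay : a * y * y = 0 := by rw [mul_assoc, hy, mul_zero]
      simp only [LinearMap.add_apply, LinearMap.smul_apply, TensorProduct.map_tmul,
        LinearMap.mulRight_apply, LinearMap.mulLeft_apply, LinearMap.id_apply, map_add, map_smul,
        hay, hyb, TensorProduct.zero_tmul, TensorProduct.tmul_zero, smul_zero, add_zero, zero_add,
        smul_smul]
      rw [← add_smul, show d * s + s' * d = 0 by linear_combination d * hs, zero_smul]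
  | add u v hu hv => simp only [map_add, hu, hv, add_zero]

lemma auxB (k : Type) [Field k] (A : Type) [Ring A] [Algebra k A] (x y : A) (q : k)
    (hxy : x * y + q • (y * x) = 0)
    (c d s c₂ d₂ s₂ : k) (h1 : d₂ = q * d) (h2 : s₂ = -s) (h3 : c₂ = -(q * c)) (z : A ⊗[k] A) :
    ((TensorProduct.map (LinearMap.mulRight k x) LinearMap.id
      + c • TensorProduct.map LinearMap.id (LinearMap.mulLeft k x) : A ⊗[k] A →ₗ[k] A ⊗[k] A))
    (((d₂ • TensorProduct.map (LinearMap.mulRight k y) LinearMap.id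
      + s₂ • TensorProduct.map LinearMap.id (LinearMap.mulLeft k y) : A ⊗[k] A →ₗ[k] A ⊗[k] A)) z)
    + ((d • TensorProduct.map (LinearMap.mulRight k y) LinearMap.id
      + s • TensorProduct.map LinearMap.id (LinearMap.mulLeft k y) : A ⊗[k] A →ₗ[k] A ⊗[k] A))
    (((TensorProduct.map (LinearMap.mulRight k x) LinearMap.id
      + c₂ • TensorProduct.map LinearMap.id (LinearMap.mulLeft k x) : A ⊗[k] A →ₗ[k] A ⊗[k] A)) z) = 0 := by
  induction z using TensorProduct.induction_on with
  | zero => simp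
  | tmul a b =>
      subst h1 h2 h3
      have exy : x * y = (-q) • (y * x) := by
        rw [neg_smul]; exact eq_neg_of_add_eq_zero_left hxy
      have e1 : a * x * y = (-q) • (a * (y * x)) := by
        rw [mul_assoc, exy, mul_smul_comm]
      have e2 : x * (y * b) = (-q) • (y * (x * b)) := by
        rw [← mul_assoc, exy, smul_mul_assoc, mul_assoc]
      simp only [LinearMap.add_apply, LinearMap.smul_apply, TensorProduct.map_tmul,
        LinearMap.mulRight_apply, LinearMap.mulLeft_apply, LinearMap.id_apply, map_add, map_smul,
        e1, e2, mul_assoc, TensorProduct.smul_tmul', TensorProduct.tmul_smul, smul_smul]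
      simp only [← TensorProduct.smul_tmul']
      module
  | add u v hu hv =>
      simp only [map_add]
      rw [add_add_add_comm, hu, hv, add_zero]

set_option maxHeartbeats 1600000

/-- for the minimal bimodule resolution of `Λ` with differentials
`δₙ(f̃ⁿᵢ) = [x f̃^{n−1}ᵢ + (−1)ⁿqⁱ f̃^{n−1}ᵢ x] + [q^{n−i} y f̃^{n−1}_{i−1} + (−1)ⁿ f̃^{n−1}_{i−1} y]`,
one has `δₙ ∘ δ_{n+1} = 0` for all `n ≥ 1` (here `δₙ = deltaRes k q (n-1)`,
so the statement is `deltaRes m ∘ deltaRes (m+1) = 0` for all `m ≥ 0`). -/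
theorem stmt5 (k : Type) [Field k] (q : k) (hq : q ≠ 0)
    (hq' : ∀ m : ℕ, 0 < m → q ^ m ≠ 1) (m : ℕ) :
    (deltaRes k q m) ∘ₗ (deltaRes k q (m + 1)) = 0 := by
  have hx2 : Xg k q * Xg k q = 0 := by
    have h := RingQuot.mkAlgHom_rel k (QRel.x2 (k := k) (q := q))
    simpa [Xg] using h
  have hy2 : Yg k q * Yg k q = 0 := by
    have h := RingQuot.mkAlgHom_rel k (QRel.y2 (k := k) (q := q))
    simpa [Yg] using h
  have hxy : Xg k q * Yg k q + q • (Yg k q * Xg k q) = 0 := by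
    have h := RingQuot.mkAlgHom_rel k (QRel.xy (k := k) (q := q))
    simpa [Xg, Yg] using h
  apply LinearMap.ext
  intro p
  funext j
  have hjm : (j : ℕ) ≤ m := Nat.lt_succ_iff.mp j.isLt
  simp only [deltaRes, LinearMap.comp_apply, LinearMap.pi_apply, LinearMap.add_apply,
    LinearMap.proj_apply, LinearMap.zero_apply, Pi.zero_apply, map_add,
    Fin.coe_castSucc, Fin.val_succ, Fin.succ_castSucc, Nat.add_sub_add_right]
  have hA := auxA k (Lam k q) (Xg k q) hx2
    ((-1 : k) ^ (m + 1) * q ^ (j : ℕ)) ((-1 : k) ^ (m + 1 + 1) * q ^ (j : ℕ))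
    (by ring) (p j.castSucc.castSucc)
  have hB := auxB k (Lam k q) (Xg k q) (Yg k q) q hxy
    ((-1 : k) ^ (m + 1) * q ^ (j : ℕ)) (q ^ (m - (j : ℕ))) ((-1 : k) ^ (m + 1))
    ((-1 : k) ^ (m + 1 + 1) * q ^ ((j : ℕ) + 1)) (q ^ (m + 1 - (j : ℕ)))
    ((-1 : k) ^ (m + 1 + 1))
    (by rw [show m + 1 - (j : ℕ) = (m - (j : ℕ)) + 1 by omega, pow_succ'])
    (by ring) (by ring) (p j.succ.castSucc)
  have hC := auxC k (Lam k q) (Yg k q) hy2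
    (q ^ (m - (j : ℕ))) ((-1 : k) ^ (m + 1)) ((-1 : k) ^ (m + 1 + 1))
    (by ring) (p j.succ.succ)
  simp only [LinearMap.add_apply, map_add] at hA hB hC
  have hsum := congrArg₂ (· + ·) (congrArg₂ (· + ·) hA hB) hC
  simp only [add_zero] at hsum
  abel_nf at hsum ⊢
  exact hsum
end

section
/- Let ψ(x) = αx, ψ(y) = βy with α, β ∈ k nonzero, and for n ≥ 1 let dₙ : Λⁿ → Λ^{n+1} be the k-linear map sending λeᵢ^{n−1} ↦ [xλ + (−1)ⁿqⁱλψ(x)]eᵢⁿ + [q^{n−i−1}yλ + (−1)ⁿλψ(y)]e^n_{i+1} for 0 ≤ i ≤ n−1. Then d_{n+1} ∘ dₙ = 0 for all n ≥ 1. -/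
/-- The matrix of the differential `dₙ : Λⁿ → Λ^{n+1}` of the complex computing
`HH^*(Λ, ₁Λ_ψ)` for `ψ(x) = αx`, `ψ(y) = βy`, in the standard basis
`{eᵢ, xeᵢ, yeᵢ, yxeᵢ}` (encoded by `Fin 4` as `0 ↦ eᵢ, 1 ↦ xeᵢ, 2 ↦ yeᵢ, 3 ↦ yxeᵢ`):
`eᵢ^{n−1} ↦ [1+(−1)ⁿqⁱα]xeᵢⁿ + [q^{n−i−1}+(−1)ⁿβ]ye^n_{i+1}`,
`xeᵢ^{n−1} ↦ [q^{n−i−1}+(−1)^{n+1}qβ]yxe^n_{i+1}`,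
`yeᵢ^{n−1} ↦ [−q+(−1)ⁿqⁱα]yxeᵢⁿ`, `yxeᵢ^{n−1} ↦ 0`. -/
def Dmat (k : Type) [Field k] (q α β : k) (n : ℕ) :
    Matrix (Fin (n + 1) × Fin 4) (Fin n × Fin 4) k := fun jb ia =>
  if jb.2 = 1 ∧ ia.2 = 0 ∧ (jb.1 : ℕ) = (ia.1 : ℕ) then
    1 + (-1 : k) ^ n * q ^ (ia.1 : ℕ) * α
  else if jb.2 = 2 ∧ ia.2 = 0 ∧ (jb.1 : ℕ) = (ia.1 : ℕ) + 1 then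
    q ^ (n - (ia.1 : ℕ) - 1) + (-1 : k) ^ n * β
  else if jb.2 = 3 ∧ ia.2 = 1 ∧ (jb.1 : ℕ) = (ia.1 : ℕ) + 1 then
    q ^ (n - (ia.1 : ℕ) - 1) + (-1 : k) ^ (n + 1) * q * β
  else if jb.2 = 3 ∧ ia.2 = 2 ∧ (jb.1 : ℕ) = (ia.1 : ℕ) then
    -q + (-1 : k) ^ n * q ^ (ia.1 : ℕ) * α
  else 0

/-- The differential `dₙ : Λⁿ → Λ^{n+1}` as a `k`-linear map. -/
noncomputable def dMap (k : Type) [Field k] (q α β : k) (n : ℕ) :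
    (Fin n × Fin 4 → k) →ₗ[k] (Fin (n + 1) × Fin 4 → k) :=
  (Dmat k q α β n).mulVecLin


lemma castS' {n : ℕ} (x : Fin (n+1)) (i : Fin n) : ((x:ℕ) = (i:ℕ)) ↔ x = i.castSucc := by
  rw [Fin.ext_iff]; simp

lemma succS' {n : ℕ} (x : Fin (n+1)) (i : Fin n) : ((x:ℕ) = (i:ℕ) + 1) ↔ x = i.succ := by
  rw [Fin.ext_iff]; simp

lemma Dmat_mul_Dmat (k : Type) [Field k] (q α β : k) (n : ℕ) :
    Dmat k q α β (n+1) * Dmat k q α β n = 0 := by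
  ext ⟨m, c⟩ ⟨i, a⟩
  rw [Matrix.mul_apply, Fintype.sum_prod_type]
  simp only [Fin.sum_univ_four, Dmat, Matrix.zero_apply]
  fin_cases c <;> fin_cases a <;>
    simp only [Fin.isValue, Fin.reduceEq, and_false, false_and, and_true, true_and, if_false,
      if_true, ite_true, ite_false, mul_zero, zero_mul, add_zero, zero_add, ite_mul, mul_ite,
      Finset.sum_const_zero, Fin.mk_one, Fin.zero_eta, show (⟨2,by omega⟩ : Fin 4) = 2 from rfl,
      show (⟨3,by omega⟩ : Fin 4) = 3 from rfl]
  all_goals (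
    simp only [castS', succS', Finset.sum_add_distrib, Finset.sum_ite_eq', Finset.mem_univ,
      if_true, Fin.coe_castSucc, Fin.val_succ, Fin.succ_castSucc])
  all_goals try simp
  all_goals split_ifs with h1 <;> try simp
  · have hj : (i : ℕ) < n := i.isLt
    have e1 : n + 1 - (i:ℕ) - 1 = n - (i:ℕ) := by omega
    have e2 : q ^ (n - (i:ℕ)) = q ^ (n - (i:ℕ) - 1) * q := by
      rw [← pow_succ]; congr 1; omega
    have e3 : q ^ ((i:ℕ)+1) = q^(i:ℕ) * q := pow_succ q _
    have e4 : (-1:k)^(n+1) = -(-1:k)^n := by rw [pow_succ]; ring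
    have e5 : (-1:k)^(n+1+1) = (-1:k)^n := by rw [pow_succ, pow_succ]; ring
    rw [e1, e2, e3, e4, e5]
    ring

/-- for `ψ(x) = αx`, `ψ(y) = βy` with `α, β` nonzero, the maps
`dₙ(λeᵢ^{n−1}) = [xλ + (−1)ⁿqⁱλψ(x)]eᵢⁿ + [q^{n−i−1}yλ + (−1)ⁿλψ(y)]e^n_{i+1}`
form a complex: `d_{n+1} ∘ dₙ = 0` for all `n ≥ 1`. -/
theorem stmt6 (k : Type) [Field k] (q α β : k) (hq : q ≠ 0)
    (hq' : ∀ m : ℕ, 0 < m → q ^ m ≠ 1) (hα : α ≠ 0) (hβ : β ≠ 0)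
    (n : ℕ) (hn : 1 ≤ n) :
    (dMap k q α β (n + 1)) ∘ₗ (dMap k q α β n) = 0 := by
  rw [dMap, dMap, ← Matrix.mulVecLin_mul, Dmat_mul_Dmat, Matrix.mulVecLin_zero]
end

section
/- For the map d₁ : Λ → Λ² given by e⁰₀ ↦ (1−α)xe¹₀ + (1−β)ye¹₁, xe⁰₀ ↦ (1+qβ)yxe¹₁, ye⁰₀ ↦ −(q+α)yxe¹₀, yxe⁰₀ ↦ 0, the kernel has dimension 3 if (α,β) = (−q,−q⁻¹); dimension 2 if (α,β)=(1,1), or α=−q and β≠−q⁻¹, or α≠−q and β=−q⁻¹; and dimension 1 otherwise — provided char k ≠ 2. (In particular dim_k HH⁰(Λ, ₁Λ_ψ) = dim_k Ker d₁ is given by this formula.) -/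
open Matrix Module

section SubsingletonRowSupport

variable {R m n : Type*} [CommRing R] [IsDomain R] [Fintype n]

theorem Matrix.mulVec_eq_zero_iff_of_subsingleton_row_support {M : Matrix m n R}
    (hM : ∀ i, {j | M i j ≠ 0}.Subsingleton) (v : n → R) :
    M *ᵥ v = 0 ↔ ∀ j, (∃ i, M i j ≠ 0) → v j = 0 := by
  constructor
  · rintro hv j ⟨i, hij⟩
    have hrow : (M *ᵥ v) i = M i j * v j :=
      Finset.sum_eq_single j (fun j' _ hj' => by
        by_cases h : M i j' = 0
        · simp [h]
        · exact absurd (hM i h hij) hj') (by simp)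
    rw [hv, Pi.zero_apply, eq_comm, mul_eq_zero] at hrow
    exact hrow.resolve_left hij
  · intro hv
    ext i
    refine Finset.sum_eq_zero fun j _ => ?_
    by_cases h : M i j = 0
    · simp [h]
    · simp [hv j ⟨i, h⟩]

theorem Matrix.finrank_ker_mulVecLin_of_subsingleton_row_support [Fintype m]
    {M : Matrix m n R} (hM : ∀ i, {j | M i j ≠ 0}.Subsingleton) :
    finrank R (LinearMap.ker M.mulVecLin) = Nat.card {j // ∀ i, M i j = 0} := by
  classical
  let I : Set n := {j | ∀ i, M i j = 0}
  have hker : LinearMap.ker M.mulVecLin =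
      ⨅ j ∈ Iᶜ, LinearMap.ker (LinearMap.proj j : (n → R) →ₗ[R] R) := by
    ext v
    simp [Submodule.mem_iInf, mulVec_eq_zero_iff_of_subsingleton_row_support hM, I]
  rw [hker, (LinearMap.iInfKerProjEquiv R (fun _ => R) disjoint_compl_right
    (by simp)).finrank_eq, Module.finrank_fintype_fun_eq_card, Nat.card_eq_fintype_card]
  rfl

end SubsingletonRowSupport

section FirstDifferential

variable {k : Type} [Field k] (q α β : k)

theorem Dmat_one_row_support_subsingleton (i : Fin 2 × Fin 4) :
    {j | Dmat k q α β 1 i j ≠ 0}.Subsingleton := by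
  intro j hj j' hj'
  fin_cases i <;> fin_cases j <;> fin_cases j' <;> simp_all [Dmat]

theorem Dmat_one_col_eq_zero_iff (hq : q ≠ 0) (b : Fin 4) :
    (∀ i, Dmat k q α β 1 i (0, b) = 0) ↔ ![α = 1 ∧ β = 1, β = -q⁻¹, α = -q, True] b := by
  fin_cases b <;> simp [Dmat, Prod.forall, Fin.forall_fin_succ] <;> grind

open Classical in
theorem finrank_ker_dMap_one (hq : q ≠ 0) :
    finrank k (LinearMap.ker (dMap k q α β 1)) =
      (if α = 1 ∧ β = 1 then 1 else 0) + (if β = -q⁻¹ then 1 else 0) +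
        (if α = -q then 1 else 0) + 1 := by
  rw [dMap, finrank_ker_mulVecLin_of_subsingleton_row_support
      (Dmat_one_row_support_subsingleton q α β),
    Nat.card_congr ((Equiv.uniqueProd (Fin 4) (Fin 1)).subtypeEquiv
      (q := fun b => ![α = 1 ∧ β = 1, β = -q⁻¹, α = -q, True] b) fun ⟨u, b⟩ => by
        rw [Subsingleton.elim u 0]; exact Dmat_one_col_eq_zero_iff q α β hq b),
    Nat.card_eq_fintype_card, Fintype.card_subtype, Finset.card_filter, Fin.sum_univ_four]
  simp only [Fin.isValue, cons_val_zero, cons_val_one, cons_val, ↓reduceIte,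
    Nat.add_right_cancel_iff]
  congr

end FirstDifferential

theorem stmt8_general (k : Type) [Field k] (q α β : k) (hq : q ≠ 0)
    (hq' : ∀ m : ℕ, 0 < m → q ^ m ≠ 1) :
    (α = -q ∧ β = -q⁻¹ →
      Module.finrank k ↥(LinearMap.ker (dMap k q α β 1)) = 3) ∧
    ((α = 1 ∧ β = 1) ∨ (α = -q ∧ β ≠ -q⁻¹) ∨ (α ≠ -q ∧ β = -q⁻¹) →
      Module.finrank k ↥(LinearMap.ker (dMap k q α β 1)) = 2) ∧
    (¬(α = -q ∧ β = -q⁻¹) →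
      ¬((α = 1 ∧ β = 1) ∨ (α = -q ∧ β ≠ -q⁻¹) ∨ (α ≠ -q ∧ β = -q⁻¹)) →
      Module.finrank k ↥(LinearMap.ker (dMap k q α β 1)) = 1) := by
  have hnq : -q ≠ 1 := fun h => hq' 2 two_pos (by linear_combination (1 - q) * h)
  have hnq_inv : -q⁻¹ ≠ 1 := fun h => hnq (by rw [← inv_inv q, ← inv_neg, h, inv_one])
  rw [finrank_ker_dMap_one q α β hq]
  refine ⟨?_, ?_, ?_⟩
  · rintro ⟨rfl, rfl⟩
    simp [hnq]
  · rintro (⟨rfl, rfl⟩ | ⟨rfl, hβ⟩ | ⟨hα, rfl⟩)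
    · simp [hnq.symm, hnq_inv.symm]
    · simp [hnq, hβ]
    · simp [hnq_inv, hα]
  · intro hthree htwo
    obtain ⟨hαβ, hα, hβ⟩ : ¬(α = 1 ∧ β = 1) ∧ α ≠ -q ∧ β ≠ -q⁻¹ := by tauto
    rw [if_neg hαβ, if_neg hβ, if_neg hα]

/-- for `char k ≠ 2`, the kernel of
`d₁ : e⁰₀ ↦ (1−α)xe¹₀ + (1−β)ye¹₁, xe⁰₀ ↦ (1+qβ)yxe¹₁, ye⁰₀ ↦ −(q+α)yxe¹₀, yxe⁰₀ ↦ 0`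
has dimension 3 if `(α,β) = (−q,−q⁻¹)`; dimension 2 if `(α,β) = (1,1)`, or `α = −q`
and `β ≠ −q⁻¹`, or `α ≠ −q` and `β = −q⁻¹`; and dimension 1 otherwise.
(In particular `dim HH⁰(Λ, ₁Λ_ψ) = dim Ker d₁` is given by this formula.) -/
theorem stmt8 (k : Type) [Field k] (q α β : k) (hq : q ≠ 0)
    (hq' : ∀ m : ℕ, 0 < m → q ^ m ≠ 1) (hα : α ≠ 0) (hβ : β ≠ 0)
    (hchar : ringChar k ≠ 2) :
    (α = -q ∧ β = -q⁻¹ →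
      Module.finrank k ↥(LinearMap.ker (dMap k q α β 1)) = 3) ∧
    ((α = 1 ∧ β = 1) ∨ (α = -q ∧ β ≠ -q⁻¹) ∨ (α ≠ -q ∧ β = -q⁻¹) →
      Module.finrank k ↥(LinearMap.ker (dMap k q α β 1)) = 2) ∧
    (¬(α = -q ∧ β = -q⁻¹) →
      ¬((α = 1 ∧ β = 1) ∨ (α = -q ∧ β ≠ -q⁻¹) ∨ (α ≠ -q ∧ β = -q⁻¹)) →
      Module.finrank k ↥(LinearMap.ker (dMap k q α β 1)) = 1) :=
  stmt8_general k q α β hq hq'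
end

section
/- If α and β are both not of the form ±qⁱ for any integer i, then for every n ≥ 1 the image of dₙ has k-dimension exactly 2n+1, and consequently dim_k Ker d_{n+1} − dim_k Im dₙ = 0, i.e. HHⁿ(Λ, ₁Λ_ψ) = 0 for all n > 0. -/
open Matrix

/-- standard basis vector -/
def sb (k : Type) [Field k] (n : ℕ) (p : Fin (n + 1) × Fin 4) :
    Fin (n + 1) × Fin 4 → k := fun x => if x = p then 1 else 0

section nz
variable {k : Type} [Field k] {q α β : k}

lemma nzA (hq : q ≠ 0) (hA : ¬∃ i : ℤ, α = q ^ i ∨ α = -(q ^ i)) (m i : ℕ) :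
    1 + (-1 : k) ^ m * q ^ i * α ≠ 0 := by
  intro h0
  apply hA
  refine ⟨-(i : ℤ), ?_⟩
  have hz : (q : k) ^ (-(i : ℤ)) = (q ^ i)⁻¹ := by rw [_root_.zpow_neg, zpow_natCast]
  have hqi : (q : k) ^ i ≠ 0 := pow_ne_zero _ hq
  rcases Nat.even_or_odd m with he | ho
  · rw [he.neg_one_pow] at h0
    right
    have h1 : (-α) * q ^ i = 1 := by linear_combination -h0
    rw [hz, ← eq_inv_of_mul_eq_one_left h1, neg_neg]
  · rw [ho.neg_one_pow] at h0
    left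
    have h1 : α * q ^ i = 1 := by linear_combination -h0
    rw [hz]
    exact eq_inv_of_mul_eq_one_left h1

lemma nzD (hq : q ≠ 0) (hA : ¬∃ i : ℤ, α = q ^ i ∨ α = -(q ^ i)) (m i : ℕ) :
    -q + (-1 : k) ^ m * q ^ i * α ≠ 0 := by
  intro h0
  apply hA
  refine ⟨1 - (i : ℤ), ?_⟩
  have hz : (q : k) ^ ((1 : ℤ) - (i : ℤ)) = q * (q ^ i)⁻¹ := by
    rw [zpow_sub₀ hq, zpow_one, zpow_natCast, div_eq_mul_inv]
  have hqi : (q : k) ^ i ≠ 0 := pow_ne_zero _ hq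
  rcases Nat.even_or_odd m with he | ho
  · rw [he.neg_one_pow] at h0
    left
    rw [hz]
    field_simp
    linear_combination h0
  · rw [ho.neg_one_pow] at h0
    right
    rw [hz]
    field_simp
    linear_combination -h0

lemma nzB (hq : q ≠ 0) (hB : ¬∃ i : ℤ, β = q ^ i ∨ β = -(q ^ i)) (m e : ℕ) :
    q ^ e + (-1 : k) ^ m * β ≠ 0 := by
  intro h0
  apply hB
  refine ⟨(e : ℤ), ?_⟩
  have hz : (q : k) ^ (e : ℤ) = q ^ e := zpow_natCast q e
  rcases Nat.even_or_odd m with he | ho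
  · rw [he.neg_one_pow] at h0
    right
    rw [hz]
    linear_combination h0
  · rw [ho.neg_one_pow] at h0
    left
    rw [hz]
    linear_combination -h0

lemma nzC (hq : q ≠ 0) (hB : ¬∃ i : ℤ, β = q ^ i ∨ β = -(q ^ i)) (m e : ℕ) :
    q ^ e + (-1 : k) ^ (m + 1) * q * β ≠ 0 := by
  intro h0
  apply hB
  refine ⟨(e : ℤ) - 1, ?_⟩
  have hz : (q : k) ^ ((e : ℤ) - 1) = q ^ e * q⁻¹ := by
    rw [zpow_sub₀ hq, zpow_one, zpow_natCast, div_eq_mul_inv]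
  rcases Nat.even_or_odd m with he | ho
  · have : Odd (m + 1) := Even.add_one he
    rw [this.neg_one_pow] at h0
    left
    rw [hz]
    field_simp
    linear_combination -h0
  · have : Even (m + 1) := Odd.add_one ho
    rw [this.neg_one_pow] at h0
    right
    rw [hz]
    field_simp
    linear_combination h0
end nz

section rank
variable {k : Type} [Field k] {q α β : k}

lemma rank_dMap (hq : q ≠ 0)
    (hASig : ¬∃ i : ℤ, α = q ^ i ∨ α = -(q ^ i))
    (hBSig : ¬∃ i : ℤ, β = q ^ i ∨ β = -(q ^ i))
    (m : ℕ) (hm : 1 ≤ m) :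
    Module.finrank k ↥(LinearMap.range (dMap k q α β m)) = 2 * m + 1 := by
  classical
  set M : Matrix (Fin (m + 1) × Fin 4) (Fin m × Fin 4) k := Dmat k q α β m with hM
  set u : (Fin m ⊕ Fin (m + 1)) → (Fin (m + 1) × Fin 4 → k) :=
    Sum.elim (fun i => Mᵀ (i, 0)) (fun j => sb k m (j, 3)) with hu
  -- column identities
  have col1 : ∀ (i : Fin m) (j : Fin (m + 1)), (j : ℕ) = (i : ℕ) + 1 →
      Mᵀ (i, 1) = (q ^ (m - (i : ℕ) - 1) + (-1 : k) ^ (m + 1) * q * β) • sb k m (j, 3) := by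
    intro i j hj
    funext p
    obtain ⟨j', b⟩ := p
    simp only [hM, Matrix.transpose_apply, Dmat, sb, Pi.smul_apply, smul_eq_mul]
    fin_cases b <;> simp [Prod.ext_iff, Fin.ext_iff] <;> split_ifs <;> simp_all <;> omega
  have col2 : ∀ (i : Fin m) (j : Fin (m + 1)), (j : ℕ) = (i : ℕ) →
      Mᵀ (i, 2) = (-q + (-1 : k) ^ m * q ^ (i : ℕ) * α) • sb k m (j, 3) := by
    intro i j hj
    funext p
    obtain ⟨j', b⟩ := p
    simp only [hM, Matrix.transpose_apply, Dmat, sb, Pi.smul_apply, smul_eq_mul]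
    fin_cases b <;> simp [Prod.ext_iff, Fin.ext_iff] <;> split_ifs <;> simp_all <;> omega
  have col3 : ∀ i : Fin m, Mᵀ (i, 3) = 0 := by
    intro i
    funext p
    obtain ⟨j', b⟩ := p
    simp only [hM, Matrix.transpose_apply, Dmat]
    fin_cases b <;> simp
  have v1 : ∀ (i' : Fin m) (j : Fin (m + 1)),
      Mᵀ (i', 0) (j, 1) = if (j : ℕ) = (i' : ℕ) then
        1 + (-1 : k) ^ m * q ^ (i' : ℕ) * α else 0 := by
    intro i' j
    simp only [hM, Matrix.transpose_apply, Dmat]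
    split_ifs <;> simp_all
  have v2 : ∀ (i' : Fin m) (j : Fin (m + 1)), Mᵀ (i', 0) (j, 3) = 0 := by
    intro i' j
    simp only [hM, Matrix.transpose_apply, Dmat]
    split_ifs <;> simp_all
  -- linear independence
  have hind : LinearIndependent k u := by
    rw [Fintype.linearIndependent_iff]
    intro g hg t
    have hval : ∀ p, (∑ t, g t • u t) p = 0 := by intro p; rw [hg]; rfl
    cases t with
    | inl i =>
      have h := hval (i.castSucc, 1)
      rw [Finset.sum_apply] at h
      have h0 : ∀ b ∈ Finset.univ, b ≠ Sum.inl i →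
          (g b • u b) (i.castSucc, 1) = 0 := by
        rintro (i' | j) - hb
        · have hne : ¬((i.castSucc : ℕ) = (i' : ℕ)) := by
            simp only [Fin.coe_castSucc]
            intro hc
            exact hb (by simp [Fin.ext_iff, hc.symm])
          have hz : u (Sum.inl i') (i.castSucc, 1) = 0 := by
            rw [hu, Sum.elim_inl, v1, if_neg hne]
          rw [Pi.smul_apply, hz, smul_zero]
        · have hz : u (Sum.inr j) (i.castSucc, 1) = 0 := by
            rw [hu, Sum.elim_inr]
            simp [sb, Prod.ext_iff]
          rw [Pi.smul_apply, hz, smul_zero]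
      have hsum : ∑ t, (g t • u t) (i.castSucc, 1)
          = (g (Sum.inl i) • u (Sum.inl i)) (i.castSucc, 1) :=
        Finset.sum_eq_single _ h0 (fun h => absurd (Finset.mem_univ _) h)
      have heval : (g (Sum.inl i) • u (Sum.inl i)) (i.castSucc, 1)
          = g (Sum.inl i) * (1 + (-1 : k) ^ m * q ^ (i : ℕ) * α) := by
        rw [Pi.smul_apply, hu, Sum.elim_inl, v1, if_pos (by simp), smul_eq_mul]
      rw [hsum, heval] at h
      rcases mul_eq_zero.mp h with h' | h'
      · exact h'
      · exact absurd h' (nzA hq hASig m (i : ℕ))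
    | inr j =>
      have h := hval (j, 3)
      rw [Finset.sum_apply] at h
      have h0 : ∀ b ∈ Finset.univ, b ≠ Sum.inr j → (g b • u b) (j, 3) = 0 := by
        rintro (i' | j') - hb
        · have hz : u (Sum.inl i') (j, 3) = 0 := by rw [hu, Sum.elim_inl, v2]
          rw [Pi.smul_apply, hz, smul_zero]
        · have hne : j ≠ j' := by intro hc; exact hb (by rw [hc])
          have hz : u (Sum.inr j') (j, 3) = 0 := by
            rw [hu, Sum.elim_inr]
            simp [sb, Prod.ext_iff, hne]
          rw [Pi.smul_apply, hz, smul_zero]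
      have hsum : ∑ t, (g t • u t) (j, 3) = (g (Sum.inr j) • u (Sum.inr j)) (j, 3) :=
        Finset.sum_eq_single _ h0 (fun h => absurd (Finset.mem_univ _) h)
      have heval : (g (Sum.inr j) • u (Sum.inr j)) (j, 3) = g (Sum.inr j) := by
        rw [Pi.smul_apply, hu, Sum.elim_inr, smul_eq_mul]
        simp [sb]
      rw [hsum, heval] at h
      exact h
  -- span equality
  have hrange : LinearMap.range (dMap k q α β m) = Submodule.span k (Set.range u) := by
    rw [show dMap k q α β m = M.mulVecLin from rfl, Matrix.range_mulVecLin]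
    apply le_antisymm
    · rw [Submodule.span_le]
      rintro _ ⟨⟨i, b⟩, rfl⟩
      fin_cases b
      · exact Submodule.subset_span ⟨Sum.inl i, rfl⟩
      · show Mᵀ (i, 1) ∈ (Submodule.span k (Set.range u) : Set _)
        rw [col1 i i.succ (by simp)]
        exact Submodule.smul_mem _ _ (Submodule.subset_span ⟨Sum.inr i.succ, rfl⟩)
      · show Mᵀ (i, 2) ∈ (Submodule.span k (Set.range u) : Set _)
        rw [col2 i i.castSucc (by simp)]
        exact Submodule.smul_mem _ _ (Submodule.subset_span ⟨Sum.inr i.castSucc, rfl⟩)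
      · show Mᵀ (i, 3) ∈ (Submodule.span k (Set.range u) : Set _)
        rw [col3 i]
        exact Submodule.zero_mem _
    · rw [Submodule.span_le]
      rintro _ ⟨t, rfl⟩
      cases t with
      | inl i => exact Submodule.subset_span ⟨(i, 0), rfl⟩
      | inr j =>
        by_cases h0 : (j : ℕ) = 0
        · set i : Fin m := ⟨0, hm⟩ with hi
          have hcol := col2 i j (by simp [hi, h0])
          have hnz := nzD hq hASig m (i : ℕ)
          have : u (Sum.inr j) = (-q + (-1 : k) ^ m * q ^ (i : ℕ) * α)⁻¹ • Mᵀ (i, 2) := by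
            rw [hcol, smul_smul, inv_mul_cancel₀ hnz, one_smul]
            rfl
          rw [this]
          exact Submodule.smul_mem _ _ (Submodule.subset_span ⟨(i, 2), rfl⟩)
        · have hjm : (j : ℕ) - 1 < m := by omega
          set i : Fin m := ⟨(j : ℕ) - 1, hjm⟩ with hi
          have hcol := col1 i j (by simp [hi]; omega)
          have hnz := nzC hq hBSig m (m - (i : ℕ) - 1)
          have : u (Sum.inr j)
              = (q ^ (m - (i : ℕ) - 1) + (-1 : k) ^ (m + 1) * q * β)⁻¹ • Mᵀ (i, 1) := by
            rw [hcol, smul_smul, inv_mul_cancel₀ hnz, one_smul]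
            rfl
          rw [this]
          exact Submodule.smul_mem _ _ (Submodule.subset_span ⟨(i, 1), rfl⟩)
  rw [hrange, finrank_span_eq_card hind]
  simp [Fintype.card_sum]
  omega
end rank

/-- if `α, β ∉ Σ = {±qⁱ : i ∈ ℤ}`, then for every `n ≥ 1` the image of
`dₙ` has dimension exactly `2n+1`, and `dim Ker d_{n+1} = dim Im dₙ`,
i.e. `HHⁿ(Λ, ₁Λ_ψ) = 0` for all `n > 0`. -/
theorem stmt9 (k : Type) [Field k] (q α β : k) (hq : q ≠ 0)
    (hq' : ∀ m : ℕ, 0 < m → q ^ m ≠ 1) (hα : α ≠ 0) (hβ : β ≠ 0)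
    (hAlphaSigma : ¬∃ i : ℤ, α = q ^ i ∨ α = -(q ^ i))
    (hBetaSigma : ¬∃ i : ℤ, β = q ^ i ∨ β = -(q ^ i))
    (n : ℕ) (hn : 1 ≤ n) :
    Module.finrank k ↥(LinearMap.range (dMap k q α β n)) = 2 * n + 1 ∧
    Module.finrank k ↥(LinearMap.ker (dMap k q α β (n + 1))) =
      Module.finrank k ↥(LinearMap.range (dMap k q α β n)) := by
  have h1 := rank_dMap hq hAlphaSigma hBetaSigma n hn
  have h2 := rank_dMap hq hAlphaSigma hBetaSigma (n + 1) (by omega)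
  refine ⟨h1, ?_⟩
  have h3 := LinearMap.finrank_range_add_finrank_ker (dMap k q α β (n + 1))
  rw [h2, Module.finrank_fintype_fun_eq_card] at h3
  simp [Fintype.card_prod] at h3
  omega
end

section
/- Suppose char k ≠ 2, α = q, and β ∉ {±qⁱ : i ∈ ℤ}. Then dim_k Im dₙ = 2n if n is even and 2n+1 if n is odd; consequently dim_k Ker d_{n+1} − dim_k Im dₙ = 1 for every n > 0, i.e. dim_k HHⁿ(Λ, ₁Λ_ψ) = 1. -/
open Matrix


namespace Stmt10Aux

lemma col0 (k : Type) [Field k] (q α β : k) (n : ℕ) (i : Fin n) :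
    (Dmat k q α β n)ᵀ (i, 0) =
      Pi.single (i.castSucc, (1 : Fin 4)) (1 + (-1:k)^n * q^(i:ℕ) * α)
      + Pi.single (i.succ, (2 : Fin 4)) (q^(n-(i:ℕ)-1) + (-1:k)^n * β) := by
  funext jb
  obtain ⟨j, b⟩ := jb
  simp only [Matrix.transpose_apply, Dmat, Pi.add_apply, Pi.single_apply, Prod.mk.injEq]
  fin_cases b <;> simp [Fin.ext_iff] <;> split_ifs <;> simp_all

lemma col1 (k : Type) [Field k] (q α β : k) (n : ℕ) (i : Fin n) :
    (Dmat k q α β n)ᵀ (i, 1) =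
      Pi.single (i.succ, (3 : Fin 4)) (q^(n-(i:ℕ)-1) + (-1:k)^(n+1) * q * β) := by
  funext jb
  obtain ⟨j, b⟩ := jb
  simp only [Matrix.transpose_apply, Dmat, Pi.single_apply, Prod.mk.injEq]
  fin_cases b <;> simp [Fin.ext_iff] <;> split_ifs <;> simp_all

lemma col2 (k : Type) [Field k] (q α β : k) (n : ℕ) (i : Fin n) :
    (Dmat k q α β n)ᵀ (i, 2) =
      Pi.single (i.castSucc, (3 : Fin 4)) (-q + (-1:k)^n * q^(i:ℕ) * α) := by
  funext jb
  obtain ⟨j, b⟩ := jb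
  simp only [Matrix.transpose_apply, Dmat, Pi.single_apply, Prod.mk.injEq]
  fin_cases b <;> simp [Fin.ext_iff] <;> split_ifs <;> simp_all

lemma col3 (k : Type) [Field k] (q α β : k) (n : ℕ) (i : Fin n) :
    (Dmat k q α β n)ᵀ (i, 3) = 0 := by
  funext jb
  obtain ⟨j, b⟩ := jb
  simp only [Matrix.transpose_apply, Dmat, Pi.zero_apply]
  fin_cases b <;> simp [Fin.ext_iff, show ((3:Fin 4):ℕ) = 3 from rfl,
    show ((0:Fin 4):ℕ) = 0 from rfl, show ((1:Fin 4):ℕ) = 1 from rfl,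
    show ((2:Fin 4):ℕ) = 2 from rfl]

/-- `B`-coefficient nonzero. -/
lemma Bne (k : Type) [Field k] (q β : k)
    (hBS : ¬∃ i : ℤ, β = q ^ i ∨ β = -(q ^ i)) (n m : ℕ) :
    q ^ m + (-1:k)^n * β ≠ 0 := by
  intro h
  apply hBS
  rcases Nat.even_or_odd n with he | ho
  · rw [he.neg_one_pow] at h
    exact ⟨m, Or.inr (by rw [zpow_natCast]; linear_combination h)⟩
  · rw [ho.neg_one_pow] at h
    exact ⟨m, Or.inl (by rw [zpow_natCast]; linear_combination -h)⟩

/-- `C`-coefficient nonzero. -/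
lemma Cne (k : Type) [Field k] (q β : k) (hq : q ≠ 0)
    (hBS : ¬∃ i : ℤ, β = q ^ i ∨ β = -(q ^ i)) (n m : ℕ) :
    q ^ m + (-1:k)^(n+1) * q * β ≠ 0 := by
  intro h
  apply hBS
  have hz : q ^ ((m : ℤ) - 1) = q ^ m * q⁻¹ := by
    rw [zpow_sub₀ hq, zpow_natCast, zpow_one, div_eq_mul_inv]
  rcases Nat.even_or_odd (n+1) with he | ho
  · rw [he.neg_one_pow] at h
    refine ⟨(m : ℤ) - 1, Or.inr ?_⟩
    rw [hz, ← neg_mul, eq_mul_inv_iff_mul_eq₀ hq]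
    linear_combination h
  · rw [ho.neg_one_pow] at h
    refine ⟨(m : ℤ) - 1, Or.inl ?_⟩
    rw [hz, eq_mul_inv_iff_mul_eq₀ hq]
    linear_combination -h

/-- `D₀` vanishes for even `n` (with `α = q`). -/
lemma D0_even (k : Type) [Field k] (q : k) (n : ℕ) (he : Even n) :
    -q + (-1:k)^n * q^(0:ℕ) * q = 0 := by
  rw [he.neg_one_pow]; ring

/-- `Dᵢ` nonzero for odd `n` (with `α = q`). -/
lemma D_odd_ne (k : Type) [Field k] (q : k) (hq : q ≠ 0)
    (hq' : ∀ m : ℕ, 0 < m → q ^ m ≠ 1) (hchar : ringChar k ≠ 2)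
    (n : ℕ) (ho : Odd n) (i : ℕ) :
    -q + (-1:k)^n * q^i * q ≠ 0 := by
  rw [ho.neg_one_pow]
  intro h
  have h1 : q * (1 + q ^ i) = 0 := by linear_combination -h
  have h2 : (1 : k) + q ^ i = 0 := by
    rcases mul_eq_zero.1 h1 with h' | h'
    · exact absurd h' hq
    · exact h'
  rcases Nat.eq_zero_or_pos i with hi | hi
  · subst hi
    simp at h2
    exact Ring.two_ne_zero hchar (by linear_combination h2)
  · apply hq' (2*i) (by omega)
    have : q ^ i = -1 := by linear_combination h2
    rw [pow_mul', this]; ring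

section Rank

variable (k : Type) [Field k] (q β : k)

/-- Submodule of functions supported on `P`. -/
def suppSub (ι : Type) (P : ι → Prop) : Submodule k (ι → k) where
  carrier := {w | ∀ i, ¬ P i → w i = 0}
  add_mem' := by intro a b ha hb i hi; simp [ha i hi, hb i hi]
  zero_mem' := by intro i hi; rfl
  smul_mem' := by intro c a ha i hi; simp [ha i hi]

lemma single_mem_suppSub {ι : Type} [DecidableEq ι] (P : ι → Prop) (a : ι) (c : k)
    (h : P a) : Pi.single a c ∈ suppSub k ι P := by
  intro i hi
  rw [Pi.single_apply, if_neg]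
  rintro rfl
  exact hi h

lemma single_indep (ι : Type) [Fintype ι] [DecidableEq ι] :
    LinearIndependent k (fun p : ι => Pi.single p (1:k)) := by
  have h := (Pi.basisFun k ι).linearIndependent
  have e : ⇑(Pi.basisFun k ι) = fun p : ι => Pi.single p (1:k) :=
    funext fun p => Pi.basisFun_apply k ι p
  rwa [e] at h

end Rank

end Stmt10Aux

namespace Stmt10Aux

lemma single_eq_smul (k : Type) [Field k] {ι : Type} [DecidableEq ι] (a : ι) (c : k) :
    (Pi.single a c : ι → k) = c • (Pi.single a (1:k) : ι → k) := by
  funext i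
  simp only [Pi.smul_apply, Pi.single_apply, smul_eq_mul]
  split <;> simp

lemma f_indep (k : Type) [Field k] (q β : k)
    (hBS : ¬∃ i : ℤ, β = q ^ i ∨ β = -(q ^ i)) (n : ℕ) :
    LinearIndependent k (fun i : Fin n => (Dmat k q q β n)ᵀ (i, 0)) := by
  classical
  set π := LinearMap.funLeft k k
    (fun i : Fin n => ((i.succ, (2:Fin 4)) : Fin (n+1) × Fin 4)) with hπ
  apply LinearIndependent.of_comp π
  have hc : ⇑π ∘ (fun i : Fin n => (Dmat k q q β n)ᵀ (i, 0))
      = fun i : Fin n => Pi.single i (q^(n-(i:ℕ)-1) + (-1:k)^n * β) := by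
    funext i i'
    simp [hπ, LinearMap.funLeft_apply, col0, Pi.single_apply, Prod.ext_iff, Fin.succ_inj]
  rw [hc]
  have h := (single_indep k (Fin n)).units_smul
    (fun i : Fin n => Units.mk0 _ (Bne k q β hBS n (n-(i:ℕ)-1)))
  have e : ((fun i : Fin n => Units.mk0 (q^(n-(i:ℕ)-1) + (-1:k)^n * β)
        (Bne k q β hBS n (n-(i:ℕ)-1))) • (fun p : Fin n => (Pi.single p (1:k) : Fin n → k)))
      = fun i : Fin n => (Pi.single i (q^(n-(i:ℕ)-1) + (-1:k)^n * β) : Fin n → k) := by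
    funext i
    simp only [Pi.smul_apply', Units.smul_def, Units.val_mk0]
    rw [← single_eq_smul]
  rwa [e] at h

end Stmt10Aux

namespace Stmt10Aux

lemma rank_even (k : Type) [Field k] (q β : k) (hq : q ≠ 0)
    (hBS : ¬∃ i : ℤ, β = q ^ i ∨ β = -(q ^ i))
    (n : ℕ) (he : Even n) :
    Module.finrank k ↥(LinearMap.range (dMap k q q β n)) = 2 * n := by
  classical
  set f : Fin n → (Fin (n+1) × Fin 4 → k) := fun i => (Dmat k q q β n)ᵀ (i, 0) with hfdef
  set g : Fin n → (Fin (n+1) × Fin 4 → k) :=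
    fun j => Pi.single (j.succ, (3:Fin 4)) (1:k) with hgdef
  set A := Submodule.span k (Set.range f) with hAdef
  set B := Submodule.span k (Set.range g) with hBdef
  have hgind : LinearIndependent k g := by
    have := (single_indep k (Fin (n+1) × Fin 4)).comp
      (fun j : Fin n => ((j.succ, (3:Fin 4)) : Fin (n+1) × Fin 4))
      (by intro a b hab; simpa [Prod.ext_iff, Fin.succ_inj] using hab)
    exact this
  have hfind := f_indep k q β hBS n
  have hrange : LinearMap.range (dMap k q q β n) = A ⊔ B := by
    rw [dMap, Matrix.range_mulVecLin]
    apply le_antisymm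
    · rw [Submodule.span_le]
      rintro v ⟨⟨i, a⟩, rfl⟩
      fin_cases a
      · exact Submodule.mem_sup_left (Submodule.subset_span ⟨i, rfl⟩)
      · show (Dmat k q q β n)ᵀ (i, 1) ∈ _
        rw [col1, single_eq_smul]
        exact Submodule.mem_sup_right
          (Submodule.smul_mem _ _ (Submodule.subset_span ⟨i, rfl⟩))
      · show (Dmat k q q β n)ᵀ (i, 2) ∈ _
        rcases i with ⟨iv, hiv⟩
        cases iv with
        | zero =>
          rw [col2]
          have h0 : (-q + (-1:k)^n * q^(((⟨0, hiv⟩ : Fin n)):ℕ) * q) = 0 := by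
            simpa using D0_even k q n he
          rw [h0, Pi.single_zero]
          exact zero_mem _
        | succ m =>
          rw [col2, single_eq_smul]
          have hmlt : m < n := by omega
          have hsing : (Pi.single (((⟨m+1, hiv⟩ : Fin n)).castSucc, (3:Fin 4)) (1:k) :
              Fin (n+1) × Fin 4 → k) = g ⟨m, hmlt⟩ := by
            have hidx : ((⟨m+1, hiv⟩ : Fin n)).castSucc = (⟨m, hmlt⟩ : Fin n).succ := by
              apply Fin.ext
              simp
            rw [hgdef, hidx]
          rw [hsing]
          exact Submodule.mem_sup_right
            (Submodule.smul_mem _ _ (Submodule.subset_span ⟨⟨m, hmlt⟩, rfl⟩))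
      · show (Dmat k q q β n)ᵀ (i, 3) ∈ _
        rw [col3]
        exact zero_mem _
    · apply sup_le
      · rw [Submodule.span_le]
        rintro v ⟨i, rfl⟩
        exact Submodule.subset_span ⟨(i, 0), rfl⟩
      · rw [Submodule.span_le]
        rintro v ⟨j, rfl⟩
        have hC := Cne k q β hq hBS n (n-(j:ℕ)-1)
        have hgj : g j = (q^(n-(j:ℕ)-1) + (-1:k)^(n+1)*q*β)⁻¹ • (Dmat k q q β n)ᵀ (j, 1) := by
          rw [col1, single_eq_smul, smul_smul, inv_mul_cancel₀ hC, one_smul, hgdef]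
        rw [hgj]
        exact Submodule.smul_mem _ _ (Submodule.subset_span ⟨(j, 1), rfl⟩)
  have hdis : Disjoint A B := by
    rw [Submodule.disjoint_def]
    intro x hxA hxB
    have h1 : x ∈ suppSub k _ (fun jb : Fin (n+1) × Fin 4 => jb.2 = 1 ∨ jb.2 = 2) := by
      refine Submodule.span_le.2 ?_ hxA
      rintro v ⟨i, rfl⟩
      rw [hfdef]
      show (Dmat k q q β n)ᵀ (i, 0) ∈ _
      rw [col0]
      exact add_mem (single_mem_suppSub k _ _ _ (Or.inl rfl))
        (single_mem_suppSub k _ _ _ (Or.inr rfl))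
    have h3 : x ∈ suppSub k _ (fun jb : Fin (n+1) × Fin 4 => jb.2 = (3:Fin 4)) := by
      refine Submodule.span_le.2 ?_ hxB
      rintro v ⟨j, rfl⟩
      exact single_mem_suppSub k _ _ _ rfl
    funext jb
    by_cases hc : jb.2 = (3:Fin 4)
    · refine h1 jb ?_
      intro hor
      rcases hor with h | h <;> rw [hc] at h <;> exact absurd h (by decide)
    · exact h3 jb hc
  have hfinA : Module.finrank k ↥A = n := by
    rw [hAdef, finrank_span_eq_card hfind, Fintype.card_fin]
  have hfinB : Module.finrank k ↥B = n := by
    rw [hBdef, finrank_span_eq_card hgind, Fintype.card_fin]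
  have hsum := Submodule.finrank_sup_add_finrank_inf_eq A B
  rw [disjoint_iff.1 hdis, finrank_bot, hfinA, hfinB] at hsum
  rw [hrange]
  omega

end Stmt10Aux

namespace Stmt10Aux

lemma rank_odd (k : Type) [Field k] (q β : k) (hq : q ≠ 0)
    (hq' : ∀ m : ℕ, 0 < m → q ^ m ≠ 1) (hchar : ringChar k ≠ 2)
    (hBS : ¬∃ i : ℤ, β = q ^ i ∨ β = -(q ^ i))
    (n : ℕ) (ho : Odd n) :
    Module.finrank k ↥(LinearMap.range (dMap k q q β n)) = 2 * n + 1 := by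
  classical
  have hn : 0 < n := ho.pos
  set f : Fin n → (Fin (n+1) × Fin 4 → k) := fun i => (Dmat k q q β n)ᵀ (i, 0) with hfdef
  set g : Fin (n+1) → (Fin (n+1) × Fin 4 → k) :=
    fun j => Pi.single (j, (3:Fin 4)) (1:k) with hgdef
  set A := Submodule.span k (Set.range f) with hAdef
  set B := Submodule.span k (Set.range g) with hBdef
  have hgind : LinearIndependent k g := by
    have := (single_indep k (Fin (n+1) × Fin 4)).comp
      (fun j : Fin (n+1) => ((j, (3:Fin 4)) : Fin (n+1) × Fin 4))
      (by intro a b hab; simpa [Prod.ext_iff] using hab)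
    exact this
  have hfind := f_indep k q β hBS n
  have hrange : LinearMap.range (dMap k q q β n) = A ⊔ B := by
    rw [dMap, Matrix.range_mulVecLin]
    apply le_antisymm
    · rw [Submodule.span_le]
      rintro v ⟨⟨i, a⟩, rfl⟩
      fin_cases a
      · exact Submodule.mem_sup_left (Submodule.subset_span ⟨i, rfl⟩)
      · show (Dmat k q q β n)ᵀ (i, 1) ∈ _
        rw [col1, single_eq_smul]
        exact Submodule.mem_sup_right
          (Submodule.smul_mem _ _ (Submodule.subset_span ⟨i.succ, rfl⟩))
      · show (Dmat k q q β n)ᵀ (i, 2) ∈ _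
        rw [col2, single_eq_smul]
        exact Submodule.mem_sup_right
          (Submodule.smul_mem _ _ (Submodule.subset_span ⟨i.castSucc, rfl⟩))
      · show (Dmat k q q β n)ᵀ (i, 3) ∈ _
        rw [col3]
        exact zero_mem _
    · apply sup_le
      · rw [Submodule.span_le]
        rintro v ⟨i, rfl⟩
        exact Submodule.subset_span ⟨(i, 0), rfl⟩
      · rw [Submodule.span_le]
        rintro v ⟨j, rfl⟩
        induction j using Fin.cases with
        | zero =>
          have hD := D_odd_ne k q hq hq' hchar n ho 0
          have hidx : ((⟨0, hn⟩ : Fin n)).castSucc = (0 : Fin (n+1)) := by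
            apply Fin.ext; simp
          have hg0 : g 0 = (-q + (-1:k)^n * q^(((⟨0, hn⟩ : Fin n)):ℕ) * q)⁻¹ •
              (Dmat k q q β n)ᵀ (⟨0, hn⟩, 2) := by
            rw [col2, single_eq_smul, smul_smul, hgdef]
            have : (((⟨0, hn⟩ : Fin n)):ℕ) = 0 := rfl
            rw [this, inv_mul_cancel₀ (by simpa using hD), one_smul, hidx]
          rw [hg0]
          exact Submodule.smul_mem _ _ (Submodule.subset_span ⟨(⟨0, hn⟩, 2), rfl⟩)
        | succ i =>
          have hC := Cne k q β hq hBS n (n-(i:ℕ)-1)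
          have hgj : g i.succ = (q^(n-(i:ℕ)-1) + (-1:k)^(n+1)*q*β)⁻¹ •
              (Dmat k q q β n)ᵀ (i, 1) := by
            rw [col1, single_eq_smul, smul_smul, inv_mul_cancel₀ hC, one_smul, hgdef]
          rw [hgj]
          exact Submodule.smul_mem _ _ (Submodule.subset_span ⟨(i, 1), rfl⟩)
  have hdis : Disjoint A B := by
    rw [Submodule.disjoint_def]
    intro x hxA hxB
    have h1 : x ∈ suppSub k _ (fun jb : Fin (n+1) × Fin 4 => jb.2 = 1 ∨ jb.2 = 2) := by
      refine Submodule.span_le.2 ?_ hxA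
      rintro v ⟨i, rfl⟩
      rw [hfdef]
      show (Dmat k q q β n)ᵀ (i, 0) ∈ _
      rw [col0]
      exact add_mem (single_mem_suppSub k _ _ _ (Or.inl rfl))
        (single_mem_suppSub k _ _ _ (Or.inr rfl))
    have h3 : x ∈ suppSub k _ (fun jb : Fin (n+1) × Fin 4 => jb.2 = (3:Fin 4)) := by
      refine Submodule.span_le.2 ?_ hxB
      rintro v ⟨j, rfl⟩
      exact single_mem_suppSub k _ _ _ rfl
    funext jb
    by_cases hc : jb.2 = (3:Fin 4)
    · refine h1 jb ?_
      intro hor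
      rcases hor with h | h <;> rw [hc] at h <;> exact absurd h (by decide)
    · exact h3 jb hc
  have hfinA : Module.finrank k ↥A = n := by
    rw [hAdef, finrank_span_eq_card hfind, Fintype.card_fin]
  have hfinB : Module.finrank k ↥B = n + 1 := by
    rw [hBdef, finrank_span_eq_card hgind, Fintype.card_fin]
  have hsum := Submodule.finrank_sup_add_finrank_inf_eq A B
  rw [disjoint_iff.1 hdis, finrank_bot, hfinA, hfinB] at hsum
  rw [hrange]
  omega

end Stmt10Aux

/-- if `char k ≠ 2`, `α = q` and `β ∉ Σ = {±qⁱ : i ∈ ℤ}`, then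
`dim Im dₙ = 2n` for `n` even and `2n+1` for `n` odd; consequently
`dim Ker d_{n+1} − dim Im dₙ = 1` for every `n > 0`, i.e. `dim HHⁿ(Λ, ₁Λ_ψ) = 1`. -/
theorem stmt10 (k : Type) [Field k] (q β : k) (hq : q ≠ 0)
    (hq' : ∀ m : ℕ, 0 < m → q ^ m ≠ 1) (hβ : β ≠ 0)
    (hchar : ringChar k ≠ 2)
    (hBetaSigma : ¬∃ i : ℤ, β = q ^ i ∨ β = -(q ^ i))
    (n : ℕ) (hn : 1 ≤ n) :
    (Even n → Module.finrank k ↥(LinearMap.range (dMap k q q β n)) = 2 * n) ∧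
    (Odd n → Module.finrank k ↥(LinearMap.range (dMap k q q β n)) = 2 * n + 1) ∧
    Module.finrank k ↥(LinearMap.ker (dMap k q q β (n + 1))) =
      Module.finrank k ↥(LinearMap.range (dMap k q q β n)) + 1 := by
  refine ⟨fun he => Stmt10Aux.rank_even k q β hq hBetaSigma n he,
    fun ho => Stmt10Aux.rank_odd k q β hq hq' hchar hBetaSigma n ho, ?_⟩
  have hdom : Module.finrank k (Fin (n+1) × Fin 4 → k) = 4*(n+1) := by
    rw [Module.finrank_fintype_fun_eq_card, Fintype.card_prod, Fintype.card_fin,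
      Fintype.card_fin]
    ring
  have hrn := LinearMap.finrank_range_add_finrank_ker (dMap k q q β (n+1))
  rw [hdom] at hrn
  rcases Nat.even_or_odd n with he | ho
  · have h1 := Stmt10Aux.rank_even k q β hq hBetaSigma n he
    have h2 := Stmt10Aux.rank_odd k q β hq hq' hchar hBetaSigma (n+1) he.add_one
    omega
  · have h1 := Stmt10Aux.rank_odd k q β hq hq' hchar hBetaSigma n ho
    have h2 := Stmt10Aux.rank_even k q β hq hBetaSigma (n+1) ho.add_one
    omega
end

section
/- Suppose char k = 2, α = q, and β ∉ {qⁱ : i ∈ ℤ}. Then dim_k Im dₙ = 2n for all n ≥ 1, and consequently dim_k Ker d_{n+1} − dim_k Im dₙ = 2 for every n > 0, i.e. dim_k HHⁿ(Λ, ₁Λ_ψ) = 2. -/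
/-! In characteristic `2` with `α = q`, the differential `dₙ` sends `xeᵢ` to a multiple of
`yx e_{i+1}` that is nonzero because `β` is not a power of `q`, sends `yeᵢ` to a multiple of
`yx eᵢ` that vanishes for `i = 0`, and kills `yxeᵢ`. So `Im dₙ` is spanned by the `n` vectors
`dₙ(eᵢ)` and the `n` vectors `yx e_{i+1}`; these are independent because the
`xeᵢ`-coordinate `1 + q^{i+1}` of `dₙ(eᵢ)` is nonzero, `q` not being a root of unity. Hence
`dim Im dₙ = 2n`, and rank–nullity on `Λ^{n+1} ≅ k^{4(n+1)}` gives `dim Ker d_{n+1} = 2n + 2`. -/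

open Matrix

variable {k : Type} [Field k]

section Columns

variable (q α β : k) (n : ℕ) (i : Fin n)

lemma Dmat_col_apply_zero :
    (Dmat k q α β n).col (i, 0) =
      Pi.single (i.castSucc, 1) (1 + (-1) ^ n * q ^ (i : ℕ) * α) +
        Pi.single (i.succ, 2) (q ^ (n - i - 1) + (-1) ^ n * β) := by
  ext ⟨j, b⟩
  simp only [col_apply, Dmat, Pi.add_apply, Pi.single_apply, Prod.mk.injEq, Fin.ext_iff,
    Fin.val_castSucc, Fin.val_succ]
  split_ifs <;> simp_all

lemma Dmat_col_apply_one :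
    (Dmat k q α β n).col (i, 1) =
      Pi.single (i.succ, 3) (q ^ (n - i - 1) + (-1) ^ (n + 1) * q * β) := by
  ext ⟨j, b⟩
  simp only [col_apply, Dmat, Pi.single_apply, Prod.mk.injEq, Fin.ext_iff, Fin.val_succ]
  split_ifs <;> simp_all

lemma Dmat_col_apply_two :
    (Dmat k q α β n).col (i, 2) =
      Pi.single (i.castSucc, 3) (-q + (-1) ^ n * q ^ (i : ℕ) * α) := by
  ext ⟨j, b⟩
  simp only [col_apply, Dmat, Pi.single_apply, Prod.mk.injEq, Fin.ext_iff, Fin.val_castSucc]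
  split_ifs <;> simp_all

lemma Dmat_col_apply_three : (Dmat k q α β n).col (i, 3) = 0 := by
  ext ⟨j, b⟩
  simp only [col_apply, Dmat]
  split_ifs <;> simp_all

end Columns

def imageFamily (q α β : k) (n : ℕ) : Fin n ⊕ Fin n → (Fin (n + 1) × Fin 4 → k) :=
  Sum.elim (fun i => (Dmat k q α β n).col (i, 0)) fun i => Pi.single (i.succ, 3) 1

-- The coordinates `(i, x)` and `(i + 1, yx)` single out the two halves of the family.
lemma linearIndependent_imageFamily (q α β : k) (n : ℕ)
    (ha : ∀ i : ℕ, 1 + (-1) ^ n * q ^ i * α ≠ 0) :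
    LinearIndependent k (imageFamily q α β n) := by
  rw [Fintype.linearIndependent_iff]
  intro g hg
  have hx (i : Fin n) : g (.inl i) * (1 + (-1) ^ n * q ^ (i : ℕ) * α) = 0 := by
    simpa [imageFamily, Dmat_col_apply_zero, Fintype.sum_sum_type, Pi.single_apply]
      using congrFun hg (i.castSucc, 1)
  have hyx (i : Fin n) : g (.inr i) = 0 := by
    simpa [imageFamily, Dmat_col_apply_zero, Fintype.sum_sum_type, Pi.single_apply]
      using congrFun hg (i.succ, 3)
  rintro (i | i)
  · exact (mul_eq_zero.mp (hx i)).resolve_right (ha i)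
  · exact hyx i

lemma single_mem_span_imageFamily (q α β : k) (n : ℕ) (i : Fin n) (c : k) :
    Pi.single (i.succ, 3) c ∈ Submodule.span k (Set.range (imageFamily q α β n)) := by
  rw [show Pi.single _ c = c • Pi.single _ (1 : k) by
    rw [← Pi.single_smul', smul_eq_mul, mul_one]]
  exact Submodule.smul_mem _ _ (Submodule.subset_span ⟨.inr i, rfl⟩)

lemma range_dMap_eq_span_imageFamily (q α β : k) (n : ℕ) (h0 : -q + (-1) ^ n * α = 0)
    (hc : ∀ i : ℕ, q ^ (n - i - 1) + (-1) ^ (n + 1) * q * β ≠ 0) :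
    LinearMap.range (dMap k q α β n) = Submodule.span k (Set.range (imageFamily q α β n)) := by
  rw [dMap, range_mulVecLin]
  apply le_antisymm
  · rw [Submodule.span_le]
    rintro _ ⟨⟨i, a⟩, rfl⟩
    obtain rfl | rfl | rfl | rfl : a = 0 ∨ a = 1 ∨ a = 2 ∨ a = 3 := by fin_cases a <;> simp
    · exact Submodule.subset_span ⟨.inl i, rfl⟩
    · rw [Dmat_col_apply_one]
      exact single_mem_span_imageFamily q α β n i _
    · rw [Dmat_col_apply_two]
      obtain hi | ⟨j, hj⟩ := Fin.eq_zero_or_eq_succ i.castSucc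
      · have : (i : ℕ) = 0 := by simpa [Fin.ext_iff] using hi
        simp [this, h0]
      · rw [hj]
        exact single_mem_span_imageFamily q α β n j _
    · simp [Dmat_col_apply_three]
  · rw [Submodule.span_le]
    rintro _ ⟨i | i, rfl⟩
    · exact Submodule.subset_span ⟨(i, 0), rfl⟩
    · have : imageFamily q α β n (.inr i) =
          (q ^ (n - i - 1) + (-1) ^ (n + 1) * q * β)⁻¹ • (Dmat k q α β n).col (i, 1) := by
        rw [Dmat_col_apply_one, ← Pi.single_smul', smul_eq_mul, inv_mul_cancel₀ (hc i)]
        rfl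
      rw [this]
      exact Submodule.smul_mem _ _ (Submodule.subset_span ⟨(i, 1), rfl⟩)

lemma finrank_range_dMap (q α β : k) (n : ℕ) (h0 : -q + (-1) ^ n * α = 0)
    (ha : ∀ i : ℕ, 1 + (-1) ^ n * q ^ i * α ≠ 0)
    (hc : ∀ i : ℕ, q ^ (n - i - 1) + (-1) ^ (n + 1) * q * β ≠ 0) :
    Module.finrank k (LinearMap.range (dMap k q α β n)) = 2 * n := by
  rw [range_dMap_eq_span_imageFamily q α β n h0 hc,
    finrank_span_eq_card (linearIndependent_imageFamily q α β n ha), Fintype.card_sum,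
    Fintype.card_fin, two_mul]

section CharTwo

variable [CharP k 2] {q β : k}

lemma one_add_pow_mul_ne_zero (hq' : ∀ m : ℕ, 0 < m → q ^ m ≠ 1) (n i : ℕ) :
    1 + (-1) ^ n * q ^ i * q ≠ 0 := by
  rw [CharTwo.neg_eq, one_pow, one_mul, ← pow_succ, Ne, CharTwo.add_eq_zero]
  exact (hq' _ i.succ_pos).symm

lemma pow_add_mul_ne_zero (hq : q ≠ 0) (hβ : ¬∃ i : ℤ, β = q ^ i) (n m : ℕ) :
    q ^ m + (-1) ^ n * q * β ≠ 0 := by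
  rw [CharTwo.neg_eq, one_pow, one_mul, Ne, CharTwo.add_eq_zero]
  intro h
  refine hβ ⟨m - 1, ?_⟩
  rw [zpow_sub_one₀ hq, zpow_natCast, h]
  field_simp

lemma finrank_range_dMap_of_charTwo (hq : q ≠ 0) (hq' : ∀ m : ℕ, 0 < m → q ^ m ≠ 1)
    (hβ : ¬∃ i : ℤ, β = q ^ i) (n : ℕ) :
    Module.finrank k (LinearMap.range (dMap k q q β n)) = 2 * n :=
  finrank_range_dMap q q β n
    (by simp only [CharTwo.neg_eq, one_pow, one_mul, CharTwo.add_self_eq_zero])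
    (one_add_pow_mul_ne_zero hq' n) fun _ => pow_add_mul_ne_zero hq hβ _ _

end CharTwo

theorem stmt11_general (k : Type) [Field k] (q β : k) (hq : q ≠ 0)
    (hq' : ∀ m : ℕ, 0 < m → q ^ m ≠ 1)
    (hchar : ringChar k = 2)
    (hBetaSigma : ¬∃ i : ℤ, β = q ^ i)
    (n : ℕ) :
    Module.finrank k ↥(LinearMap.range (dMap k q q β n)) = 2 * n ∧
    Module.finrank k ↥(LinearMap.ker (dMap k q q β (n + 1))) =
      Module.finrank k ↥(LinearMap.range (dMap k q q β n)) + 2 := by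
  have : CharP k 2 := ringChar.eq_iff.mp hchar
  have hrank (m : ℕ) := finrank_range_dMap_of_charTwo hq hq' hBetaSigma m
  refine ⟨hrank n, ?_⟩
  have hrankNullity := LinearMap.finrank_range_add_finrank_ker (dMap k q q β (n + 1))
  rw [hrank, Module.finrank_fintype_fun_eq_card, Fintype.card_prod, Fintype.card_fin,
    Fintype.card_fin] at hrankNullity
  rw [hrank]
  omega

/-- if `char k = 2`, `α = q` and `β ∉ {qⁱ : i ∈ ℤ}`, then
`dim Im dₙ = 2n` for all `n ≥ 1`, and consequently
`dim Ker d_{n+1} − dim Im dₙ = 2` for every `n > 0`, i.e. `dim HHⁿ(Λ, ₁Λ_ψ) = 2`. -/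
theorem stmt11 (k : Type) [Field k] (q β : k) (hq : q ≠ 0)
    (hq' : ∀ m : ℕ, 0 < m → q ^ m ≠ 1) (hβ : β ≠ 0)
    (hchar : ringChar k = 2)
    (hBetaSigma : ¬∃ i : ℤ, β = q ^ i)
    (n : ℕ) (hn : 1 ≤ n) :
    Module.finrank k ↥(LinearMap.range (dMap k q q β n)) = 2 * n ∧
    Module.finrank k ↥(LinearMap.ker (dMap k q q β (n + 1))) =
      Module.finrank k ↥(LinearMap.range (dMap k q q β n)) + 2 :=
  stmt11_general k q β hq hq' hchar hBetaSigma n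
end

section
/- Suppose char k ≠ 2 and (α, β) = (q, q⁻¹). Then dim_k Im dₙ = 2n−1 for n even and 2n+1 for n odd; consequently dim_k Ker d_{n+1} − dim_k Im dₙ = 2 for every n > 0, i.e. dim_k HHⁿ(Λ, ₁Λ_ψ) = 2. -/
/-!
The image of `eᵢ` has a nonzero `xeᵢ`-coordinate and no other `x`- or `yx`-coordinates, while
`xeᵢ` and `yeᵢ` go to scalar multiples of `yxe_{i+1}` and `yxeᵢ`. Hence
`rank dₙ = n + #{j | yxeⱼ is hit with a nonzero coefficient}`. For `(α, β) = (q, q⁻¹)`, as `q`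
is not a root of unity and `char k ≠ 2`, these coefficients vanish only for `n` even, exactly at
`yxe₀` and `yxeₙ`, giving `2n − 1` resp. `2n + 1`; rank–nullity for `d_{n+1}` then gives `2`.
-/

open Matrix Module Submodule Finset

theorem linearIndependent_of_apply_eq_zero_of_ne {R ι J : Type*} [Ring R] [NoZeroDivisors R]
    [Fintype ι] (v : ι → J → R) (p : ι → J)
    (hdiag : ∀ i, v i (p i) ≠ 0) (hoff : ∀ i i', i' ≠ i → v i' (p i) = 0) :
    LinearIndependent R v := by
  rw [Fintype.linearIndependent_iff]
  intro g hg i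
  have h := congrFun hg (p i)
  simp only [Finset.sum_apply, Pi.smul_apply, smul_eq_mul, Pi.zero_apply] at h
  rw [Finset.sum_eq_single i (fun i' _ hi' => by rw [hoff i i' hi', mul_zero]) (by simp)] at h
  exact (mul_eq_zero.mp h).resolve_right (hdiag i)

theorem pow_ne_neg_one_of_pow_ne_one {k : Type*} [Field k] {q : k}
    (hq' : ∀ m : ℕ, 0 < m → q ^ m ≠ 1) (hchar : ringChar k ≠ 2) (m : ℕ) : q ^ m ≠ -1 := by
  intro h
  rcases Nat.eq_zero_or_pos m with rfl | hm
  · exact Ring.neg_one_ne_one_of_char_ne_two hchar (by simpa using h.symm)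
  · exact hq' (2 * m) (by omega) (by rw [pow_mul', h, neg_one_sq])

theorem pow_eq_one_iff_of_pow_ne_one {M : Type*} [Monoid M] {q : M}
    (hq' : ∀ m : ℕ, 0 < m → q ^ m ≠ 1) (m : ℕ) : q ^ m = 1 ↔ m = 0 :=
  ⟨fun h => by_contra fun hm => hq' m (Nat.pos_of_ne_zero hm) h, fun h => by rw [h, pow_zero]⟩

namespace Dmat

section General

variable {k : Type} [Field k] (q α β : k) (n : ℕ)

def coeffEtoX (i : ℕ) : k := 1 + (-1 : k) ^ n * q ^ i * α

def coeffEtoY (i : ℕ) : k := q ^ (n - i - 1) + (-1 : k) ^ n * β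

def coeffXtoYX (i : ℕ) : k := q ^ (n - i - 1) + (-1 : k) ^ (n + 1) * q * β

def coeffYtoYX (i : ℕ) : k := -q + (-1 : k) ^ n * q ^ i * α

section

variable (i : Fin n)

lemma col_zero : (Dmat k q α β n).col (i, 0) =
    coeffEtoX q α n i • Pi.single (i.castSucc, 1) 1 +
      coeffEtoY q β n i • Pi.single (i.succ, 2) 1 := by
  ext ⟨j, b⟩
  fin_cases b <;> simp [Dmat, coeffEtoX, coeffEtoY, Pi.single_apply, Fin.ext_iff]

lemma col_one :
    (Dmat k q α β n).col (i, 1) = coeffXtoYX q β n i • Pi.single (i.succ, 3) 1 := by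
  ext ⟨j, b⟩
  fin_cases b <;> simp [Dmat, coeffXtoYX, Pi.single_apply, Fin.ext_iff]

lemma col_two :
    (Dmat k q α β n).col (i, 2) = coeffYtoYX q α n i • Pi.single (i.castSucc, 3) 1 := by
  ext ⟨j, b⟩
  fin_cases b <;> simp [Dmat, coeffYtoYX, Pi.single_apply, Fin.ext_iff]

lemma col_three : (Dmat k q α β n).col (i, 3) = 0 := by
  ext ⟨j, b⟩
  fin_cases b <;> simp [Dmat, Fin.ext_iff]

end

open Classical in
noncomputable def yxRows : Finset (Fin (n + 1)) :=
  {j | (0 < (j : ℕ) ∧ coeffXtoYX q β n (j - 1) ≠ 0) ∨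
    ((j : ℕ) < n ∧ coeffYtoYX q α n j ≠ 0)}

variable {n}

lemma single_yx_mem_span_of_mem_yxRows {j : Fin (n + 1)} (hj : j ∈ yxRows q α β n) :
    Pi.single (j, 3) 1 ∈ span k (Set.range (Dmat k q α β n).col) := by
  simp only [yxRows, mem_filter, mem_univ, true_and] at hj
  rcases hj with ⟨hj, hc⟩ | ⟨hj, hc⟩
  · let i : Fin n := ⟨j - 1, by omega⟩
    have hi : i.succ = j := Fin.ext (by simp [i]; omega)
    rw [← hi, ← inv_smul_smul₀ hc (Pi.single _ _), ← col_one q α β n i]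
    exact smul_mem _ _ (subset_span ⟨_, rfl⟩)
  · let i : Fin n := ⟨j, hj⟩
    rw [show j = i.castSucc from rfl, ← inv_smul_smul₀ hc (Pi.single _ _),
      ← col_two q α β n i]
    exact smul_mem _ _ (subset_span ⟨_, rfl⟩)

lemma range_dMap_eq_span : LinearMap.range (dMap k q α β n) = span k (Set.range
    (Sum.elim (fun i => (Dmat k q α β n).col (i, 0))
      (fun j : yxRows q α β n => Pi.single ((j : Fin (n + 1)), 3) 1))) := by
  rw [dMap, range_mulVecLin]
  refine le_antisymm (span_le.mpr ?_) (span_le.mpr ?_)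
  · rintro _ ⟨⟨i, b⟩, rfl⟩
    fin_cases b
    · exact subset_span ⟨Sum.inl i, rfl⟩
    · show (Dmat k q α β n).col (i, 1) ∈ _
      rw [col_one]
      by_cases hc : coeffXtoYX q β n i = 0
      · simp [hc]
      · refine smul_mem _ _ (subset_span ⟨Sum.inr ⟨i.succ, ?_⟩, rfl⟩)
        simp [yxRows, hc]
    · show (Dmat k q α β n).col (i, 2) ∈ _
      rw [col_two]
      by_cases hc : coeffYtoYX q α n i = 0
      · simp [hc]
      · refine smul_mem _ _ (subset_span ⟨Sum.inr ⟨i.castSucc, ?_⟩, rfl⟩)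
        simp [yxRows, hc]
    · show (Dmat k q α β n).col (i, 3) ∈ _
      simp [col_three]
  · rintro _ ⟨i | ⟨j, hj⟩, rfl⟩
    · exact subset_span ⟨_, rfl⟩
    · exact single_yx_mem_span_of_mem_yxRows q α β hj

lemma linearIndependent_cols_zero_and_singles (h : ∀ i : Fin n, coeffEtoX q α n i ≠ 0) :
    LinearIndependent k (Sum.elim (fun i => (Dmat k q α β n).col (i, 0))
      (fun j : yxRows q α β n => Pi.single ((j : Fin (n + 1)), (3 : Fin 4)) (1 : k))) := by
  refine linearIndependent_of_apply_eq_zero_of_ne _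
    (Sum.elim (fun i => (i.castSucc, 1)) (fun j => ((j : Fin (n + 1)), 3))) ?_ ?_
  · rintro (i | j)
    · simpa [col_zero, Pi.single_apply, Fin.ext_iff] using h i
    · simp
  · rintro (i | ⟨j, hj⟩) (i' | ⟨j', hj'⟩) hne
    all_goals simp_all [col_zero, Fin.ext_iff]

lemma finrank_range_dMap (h : ∀ i : Fin n, coeffEtoX q α n i ≠ 0) :
    finrank k (LinearMap.range (dMap k q α β n)) = n + #(yxRows q α β n) := by
  rw [range_dMap_eq_span, finrank_span_eq_card (linearIndependent_cols_zero_and_singles q α β h)]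
  simp

end General

section Specialization

variable {k : Type} [Field k] {q : k} {n : ℕ}
  (hq' : ∀ m : ℕ, 0 < m → q ^ m ≠ 1) (hchar : ringChar k ≠ 2)
include hq' hchar

lemma coeffEtoX_ne_zero (i : ℕ) : coeffEtoX q q n i ≠ 0 := by
  intro h
  rw [coeffEtoX, mul_assoc, ← pow_succ] at h
  rcases n.even_or_odd with he | ho
  · rw [he.neg_one_pow] at h
    exact pow_ne_neg_one_of_pow_ne_one hq' hchar (i + 1) (by linear_combination h)
  · rw [ho.neg_one_pow] at h
    exact hq' (i + 1) i.succ_pos (by linear_combination -h)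

variable (hq : q ≠ 0)
include hq

lemma coeffXtoYX_inv_eq_zero_iff (i : ℕ) :
    coeffXtoYX q q⁻¹ n i = 0 ↔ Even n ∧ n ≤ i + 1 := by
  rw [coeffXtoYX, mul_assoc, mul_inv_cancel₀ hq, mul_one, pow_succ, mul_neg_one,
    ← sub_eq_add_neg, sub_eq_zero]
  rcases n.even_or_odd with he | ho
  · rw [he.neg_one_pow, pow_eq_one_iff_of_pow_ne_one hq']
    simp only [he, true_and]
    omega
  · rw [ho.neg_one_pow]
    simpa [Nat.not_even_iff_odd.mpr ho] using pow_ne_neg_one_of_pow_ne_one hq' hchar _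

lemma coeffYtoYX_eq_zero_iff (i : ℕ) : coeffYtoYX q q n i = 0 ↔ Even n ∧ i = 0 := by
  rw [coeffYtoYX, mul_assoc]
  rcases n.even_or_odd with he | ho
  · rw [he.neg_one_pow, one_mul, neg_add_eq_zero, eq_comm, mul_eq_right₀ hq,
      pow_eq_one_iff_of_pow_ne_one hq']
    simp [he]
  · rw [ho.neg_one_pow]
    simp only [Nat.not_even_iff_odd.mpr ho, false_and, iff_false]
    intro h
    have : q * (q ^ i + 1) = 0 := by linear_combination -h
    rcases mul_eq_zero.mp this with h0 | h1
    · exact hq h0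
    · exact pow_ne_neg_one_of_pow_ne_one hq' hchar i (eq_neg_of_add_eq_zero_left h1)

lemma yxRows_of_even (he : Even n) : yxRows q q q⁻¹ n = Ioo 0 (Fin.last n) := by
  ext j
  simp only [yxRows, mem_filter, mem_univ, true_and, mem_Ioo, Fin.lt_def, Fin.val_zero,
    Fin.val_last, ne_eq, coeffXtoYX_inv_eq_zero_iff hq' hchar hq,
    coeffYtoYX_eq_zero_iff hq' hchar hq, he, true_and]
  omega

lemma yxRows_of_odd (ho : Odd n) : yxRows q q q⁻¹ n = univ := by
  ext j
  simp only [yxRows, mem_filter, mem_univ, true_and, ne_eq,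
    coeffXtoYX_inv_eq_zero_iff hq' hchar hq, coeffYtoYX_eq_zero_iff hq' hchar hq,
    Nat.not_even_iff_odd.mpr ho, false_and, not_false_eq_true, and_true, iff_true]
  have := ho.pos
  omega

lemma finrank_range_dMap_of_even (he : Even n) :
    finrank k (LinearMap.range (dMap k q q q⁻¹ n)) = 2 * n - 1 := by
  rw [finrank_range_dMap _ _ _ (fun i => coeffEtoX_ne_zero hq' hchar i),
    yxRows_of_even hq' hchar hq he, Fin.card_Ioo, Fin.val_last, Fin.val_zero]
  omega

lemma finrank_range_dMap_of_odd (ho : Odd n) :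
    finrank k (LinearMap.range (dMap k q q q⁻¹ n)) = 2 * n + 1 := by
  rw [finrank_range_dMap _ _ _ (fun i => coeffEtoX_ne_zero hq' hchar i),
    yxRows_of_odd hq' hchar hq ho, card_univ, Fintype.card_fin]
  omega

end Specialization

end Dmat

/-- if `char k ≠ 2` and `(α,β) = (q,q⁻¹)`, then `dim Im dₙ = 2n−1`
for `n` even and `2n+1` for `n` odd; consequently `dim Ker d_{n+1} − dim Im dₙ = 2`
for every `n > 0`, i.e. `dim HHⁿ(Λ, ₁Λ_ψ) = 2`. -/
theorem stmt12 (k : Type) [Field k] (q : k) (hq : q ≠ 0)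
    (hq' : ∀ m : ℕ, 0 < m → q ^ m ≠ 1)
    (hchar : ringChar k ≠ 2)
    (n : ℕ) (hn : 1 ≤ n) :
    (Even n → Module.finrank k ↥(LinearMap.range (dMap k q q q⁻¹ n)) = 2 * n - 1) ∧
    (Odd n → Module.finrank k ↥(LinearMap.range (dMap k q q q⁻¹ n)) = 2 * n + 1) ∧
    Module.finrank k ↥(LinearMap.ker (dMap k q q q⁻¹ (n + 1))) =
      Module.finrank k ↥(LinearMap.range (dMap k q q q⁻¹ n)) + 2 := by
  refine ⟨Dmat.finrank_range_dMap_of_even hq' hchar hq,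
    Dmat.finrank_range_dMap_of_odd hq' hchar hq, ?_⟩
  have hrank_nullity := LinearMap.finrank_range_add_finrank_ker (dMap k q q q⁻¹ (n + 1))
  rw [finrank_fintype_fun_eq_card, Fintype.card_prod, Fintype.card_fin, Fintype.card_fin]
    at hrank_nullity
  rcases n.even_or_odd with he | ho
  · rw [Dmat.finrank_range_dMap_of_odd hq' hchar hq he.add_one] at hrank_nullity
    rw [Dmat.finrank_range_dMap_of_even hq' hchar hq he]
    omega
  · rw [Dmat.finrank_range_dMap_of_even hq' hchar hq ho.add_one] at hrank_nullity
    rw [Dmat.finrank_range_dMap_of_odd hq' hchar hq ho]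
    omega
end

section
/- Suppose char k ≠ 2, α = ±q^s and β = ±q^t with s, t ∈ ℤ, s ≠ 1, t ≠ −1. Then for some 0 ≤ i ≤ n−1 one has dₙ(eᵢ^{n−1}) = 0 if and only if [s ≤ 0, t ≥ 0, α = (−1)^{t−s}q^s, β = (−1)^{t−s}q^t, and n = t−s+1]; and there exists 1 ≤ i ≤ n−1 with yxeᵢⁿ ∉ Im dₙ if and only if the same sign conditions hold and n = t−s+2. -/
/-!
Column `eᵢ` of `dₙ` has two entries, and for `1 ≤ i ≤ n - 1` row `yxeᵢ` meets two columns,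
each having no other nonzero entry; so `dₙ(eᵢ) = 0`, resp. `yxeᵢ ∉ Im dₙ`, exactly when these two
scalars vanish. Each vanishing scalar says that `α` or `β` equals `±q^a` for an explicit `a`, and
since `q` is not a root of unity, comparing squares shows that `±q^a = ±q^s` forces `a = s`.
Solving for `i` gives the stated conditions.
-/

open Function

section SignedPowers

variable {K : Type*} [Field K] {q α β ε : K} {s t : ℤ}

theorem zpow_right_injective_of_pow_ne_one (hq : q ≠ 0) (hq' : ∀ m : ℕ, 0 < m → q ^ m ≠ 1) :
    Injective (q ^ · : ℤ → K) := by
  have hfin : ¬IsOfFinOrder (Units.mk0 q hq) := by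
    rw [isOfFinOrder_iff_pow_eq_one]
    rintro ⟨m, hm, h⟩
    exact hq' m hm (by simpa using congrArg Units.val h)
  intro a b hab
  exact injective_zpow_iff_not_isOfFinOrder.mpr hfin (Units.ext (by simpa using hab))

theorem eq_of_eq_mul_zpow (hq : q ≠ 0) (hq' : ∀ m : ℕ, 0 < m → q ^ m ≠ 1)
    (hA : α = q ^ s ∨ α = -q ^ s) (hε : ε * ε = 1) {a : ℤ} (h : α = ε * q ^ a) : a = s := by
  have hsq : α * α = q ^ (a + a) := by
    rw [h, zpow_add₀ hq]; linear_combination q ^ a * q ^ a * hε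
  have hsq' : α * α = q ^ (s + s) := by
    rw [zpow_add₀ hq]; rcases hA with rfl | rfl <;> ring
  have := zpow_right_injective_of_pow_ne_one hq hq' (hsq.symm.trans hsq')
  omega

theorem zpow_add_mul_zpow_mul_eq_zero_iff (hq : q ≠ 0) {x : K} (hε : ε * ε = 1) {a b : ℤ} :
    q ^ b + ε * q ^ a * x = 0 ↔ x = -ε * q ^ (b - a) := by
  have ha : q ^ a ≠ 0 := zpow_ne_zero a hq
  rw [zpow_sub₀ hq]
  constructor
  · intro h
    field_simp
    linear_combination ε * h - x * q ^ a * hε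
  · rintro rfl
    field_simp
    linear_combination -q ^ b * hε

theorem eq_mul_zpow_and_eq_mul_zpow_iff (hq : q ≠ 0) (hq' : ∀ m : ℕ, 0 < m → q ^ m ≠ 1)
    (hA : α = q ^ s ∨ α = -q ^ s) (hB : β = q ^ t ∨ β = -q ^ t) (hε : ε * ε = 1)
    {a b : ℤ} :
    (α = ε * q ^ a ∧ β = ε * q ^ b) ↔ (a = s ∧ b = t ∧ α = ε * q ^ s ∧ β = ε * q ^ t) := by
  constructor
  · rintro ⟨hα, hβ⟩
    obtain rfl := eq_of_eq_mul_zpow hq hq' hA hε hα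
    obtain rfl := eq_of_eq_mul_zpow hq hq' hB hε hβ
    exact ⟨rfl, rfl, hα, hβ⟩
  · rintro ⟨rfl, rfl, hα, hβ⟩
    exact ⟨hα, hβ⟩

theorem exists_colZero_entries_eq_zero_iff (hq : q ≠ 0) (hq' : ∀ m : ℕ, 0 < m → q ^ m ≠ 1)
    (hA : α = q ^ s ∨ α = -q ^ s) (hB : β = q ^ t ∨ β = -q ^ t) (n : ℕ) :
    (∃ i < n, 1 + (-1 : K) ^ n * q ^ i * α = 0 ∧ q ^ (n - i - 1) + (-1 : K) ^ n * β = 0) ↔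
      (s ≤ 0 ∧ 0 ≤ t ∧ α = (-1 : K) ^ (t - s) * q ^ s ∧ β = (-1 : K) ^ (t - s) * q ^ t ∧
        (n : ℤ) = t - s + 1) := by
  set ε := (-1 : K) ^ n
  have hε : ε * ε = 1 := by simp [ε, ← mul_pow]
  have hsign : (-1 : K) ^ ((n : ℤ) - 1) = -ε := by simp [ε, zpow_sub₀, div_neg]
  have entries : ∀ i < n, (1 + ε * q ^ i * α = 0 ∧ q ^ (n - i - 1) + ε * β = 0) ↔
      (α = -ε * q ^ (-(i : ℤ)) ∧ β = -ε * q ^ ((n : ℤ) - i - 1)) := by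
    intro i hi
    rw [← zpow_natCast q (n - i - 1), show ((n - i - 1 : ℕ) : ℤ) = (n : ℤ) - i - 1 by omega]
    simpa using and_congr (zpow_add_mul_zpow_mul_eq_zero_iff hq hε (x := α) (a := i) (b := 0))
      (zpow_add_mul_zpow_mul_eq_zero_iff hq hε (x := β) (a := 0) (b := (n : ℤ) - i - 1))
  rw [exists_congr fun i => and_congr_right fun hi => (entries i hi).trans
    (eq_mul_zpow_and_eq_mul_zpow_iff hq hq' hA hB (by rwa [neg_mul_neg]))]
  constructor
  · rintro ⟨i, hi, hs, ht, hα, hβ⟩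
    rw [show t - s = (n : ℤ) - 1 by omega, hsign]
    exact ⟨by omega, by omega, hα, hβ, by omega⟩
  · rintro ⟨hs, ht, hα, hβ, hn⟩
    rw [show t - s = (n : ℤ) - 1 by omega, hsign] at hα hβ
    exact ⟨(-s).toNat, by omega, by omega, by omega, hα, hβ⟩

theorem exists_rowThree_entries_eq_zero_iff (hq : q ≠ 0) (hq' : ∀ m : ℕ, 0 < m → q ^ m ≠ 1)
    (hA : α = q ^ s ∨ α = -q ^ s) (hB : β = q ^ t ∨ β = -q ^ t) (n : ℕ) :
    (∃ i, 1 ≤ i ∧ i ≤ n - 1 ∧ q ^ (n - i) + (-1 : K) ^ (n + 1) * q * β = 0 ∧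
        -q + (-1 : K) ^ n * q ^ i * α = 0) ↔
      (s ≤ 0 ∧ 0 ≤ t ∧ α = (-1 : K) ^ (t - s) * q ^ s ∧ β = (-1 : K) ^ (t - s) * q ^ t ∧
        (n : ℤ) = t - s + 2) := by
  set ε := (-1 : K) ^ n
  have hε : ε * ε = 1 := by simp [ε, ← mul_pow]
  have hsign : (-1 : K) ^ ((n : ℤ) - 2) = ε := by simp [ε, zpow_sub₀]
  have entries : ∀ i ≤ n, (q ^ (n - i) + (-1 : K) ^ (n + 1) * q * β = 0 ∧
      -q + ε * q ^ i * α = 0) ↔ (α = ε * q ^ (1 - (i : ℤ)) ∧ β = ε * q ^ ((n : ℤ) - i - 1)) := by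
    intro i hi
    have hε' : -ε * -ε = 1 := by rwa [neg_mul_neg]
    have hβ : q ^ (n - i) + (-1 : K) ^ (n + 1) * q * β = 0 ↔ β = ε * q ^ ((n : ℤ) - i - 1) := by
      rw [← zpow_natCast q (n - i), show ((n - i : ℕ) : ℤ) = (n : ℤ) - i by omega, pow_succ,
        mul_neg_one]
      simpa using zpow_add_mul_zpow_mul_eq_zero_iff hq hε' (x := β) (a := 1) (b := (n : ℤ) - i)
    have hα : -q + ε * q ^ i * α = 0 ↔ α = ε * q ^ (1 - (i : ℤ)) := by
      rw [← neg_eq_zero, neg_add, neg_neg, ← neg_mul, ← neg_mul]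
      simpa using zpow_add_mul_zpow_mul_eq_zero_iff hq hε' (x := α) (a := i) (b := 1)
    exact (and_congr hβ hα).trans and_comm
  rw [exists_congr fun i => and_congr_right fun hi => and_congr_right fun hin =>
    (entries i (by omega)).trans (eq_mul_zpow_and_eq_mul_zpow_iff hq hq' hA hB hε)]
  constructor
  · rintro ⟨i, hi, hin, hs, ht, hα, hβ⟩
    rw [show t - s = (n : ℤ) - 2 by omega, hsign]
    exact ⟨by omega, by omega, hα, hβ, by omega⟩
  · rintro ⟨hs, ht, hα, hβ, hn⟩
    rw [show t - s = (n : ℤ) - 2 by omega, hsign] at hα hβ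
    exact ⟨(1 - s).toNat, by omega, by omega, by omega, by omega, hα, hβ⟩

end SignedPowers

namespace Matrix

variable {m n R : Type*} [Fintype n] [DecidableEq n]

theorem mulVecLin_single_one_eq_zero_iff [CommSemiring R] (M : Matrix m n R) (j : n) :
    M.mulVecLin (Pi.single j 1) = 0 ↔ ∀ i, M i j = 0 := by
  simp [funext_iff]

theorem single_one_mem_range_mulVecLin_iff [DecidableEq m] [Field R] {M : Matrix m n R} {i : m}
    (h : ∀ j, M i j ≠ 0 → ∀ i', M i' j ≠ 0 → i' = i) :
    Pi.single i 1 ∈ LinearMap.range M.mulVecLin ↔ ∃ j, M i j ≠ 0 := by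
  constructor
  · rintro ⟨v, hv⟩
    by_contra! hrow
    simpa [mulVec, dotProduct, hrow] using congrFun hv i
  · rintro ⟨j, hj⟩
    refine ⟨Pi.single j (M i j)⁻¹, funext fun i' => ?_⟩
    by_cases hi' : i' = i
    · subst hi'
      simp [hj]
    · have : M i' j = 0 := by_contra fun h' => hi' (h j hj i' h')
      simp [this, hi']

end Matrix

section Differential

variable (k : Type) [Field k] (q α β : k) {n : ℕ}

theorem eq_rowThree_of_Dmat_ne_zero {i : Fin (n + 1)} {c : Fin n × Fin 4}
    (hc : Dmat k q α β n (i, 3) c ≠ 0) {r : Fin (n + 1) × Fin 4} (hr : Dmat k q α β n r c ≠ 0) :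
    r = (i, 3) := by
  obtain ⟨j, b⟩ := c
  obtain ⟨l, b'⟩ := r
  fin_cases b <;> fin_cases b' <;> simp [Dmat, Fin.ext_iff] at hc hr ⊢ <;> omega

theorem dMap_single_colZero_eq_zero_iff (i : Fin n) :
    dMap k q α β n (Pi.single (i, 0) 1) = 0 ↔
      (1 + (-1 : k) ^ n * q ^ (i : ℕ) * α = 0 ∧ q ^ (n - i - 1) + (-1 : k) ^ n * β = 0) := by
  rw [dMap, Matrix.mulVecLin_single_one_eq_zero_iff]
  constructor
  · intro h
    exact ⟨by simpa [Dmat] using h (i.castSucc, 1), by simpa [Dmat] using h (i.succ, 2)⟩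
  · rintro ⟨h1, h2⟩ ⟨j, b⟩
    simp only [Dmat]
    split_ifs <;> simp_all

theorem single_rowThree_notMem_range_dMap_iff (i : Fin (n + 1)) (hi : 1 ≤ (i : ℕ))
    (hin : (i : ℕ) ≤ n - 1) :
    Pi.single (i, 3) 1 ∉ LinearMap.range (dMap k q α β n) ↔
      (q ^ (n - i) + (-1 : k) ^ (n + 1) * q * β = 0 ∧ -q + (-1 : k) ^ n * q ^ (i : ℕ) * α = 0) := by
  rw [dMap, Matrix.single_one_mem_range_mulVecLin_iff fun _ hc _ hr =>
    eq_rowThree_of_Dmat_ne_zero k q α β hc hr]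
  simp only [not_exists, not_not]
  constructor
  · intro h
    refine ⟨?_, by simpa [Dmat] using h (⟨i, by omega⟩, 2)⟩
    simpa [Dmat, show (i : ℕ) - 1 + 1 = i by omega, show n - (i - 1 : ℕ) - 1 = n - i by omega]
      using h (⟨i - 1, by omega⟩, 1)
  · rintro ⟨h1, h2⟩ ⟨j, b⟩
    simp only [Dmat]
    split_ifs <;> simp_all [Nat.sub_sub]

end Differential

theorem stmt14_general (k : Type) [Field k] (q α β : k) (hq : q ≠ 0)
    (hq' : ∀ m : ℕ, 0 < m → q ^ m ≠ 1)
    (s t : ℤ)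
    (hA : α = q ^ s ∨ α = -(q ^ s)) (hB : β = q ^ t ∨ β = -(q ^ t))
    (n : ℕ) :
    ((∃ i : Fin n, dMap k q α β n (Pi.single (i, (0 : Fin 4)) 1) = 0) ↔
      (s ≤ 0 ∧ 0 ≤ t ∧ α = (-1 : k) ^ (t - s) * q ^ s ∧
        β = (-1 : k) ^ (t - s) * q ^ t ∧ (n : ℤ) = t - s + 1)) ∧
    ((∃ i : Fin (n + 1), 1 ≤ (i : ℕ) ∧ (i : ℕ) ≤ n - 1 ∧
        Pi.single (i, (3 : Fin 4)) (1 : k) ∉ LinearMap.range (dMap k q α β n)) ↔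
      (s ≤ 0 ∧ 0 ≤ t ∧ α = (-1 : k) ^ (t - s) * q ^ s ∧
        β = (-1 : k) ^ (t - s) * q ^ t ∧ (n : ℤ) = t - s + 2)) := by
  constructor
  · rw [← exists_colZero_entries_eq_zero_iff hq hq' hA hB n, Fin.exists_iff]
    simp only [dMap_single_colZero_eq_zero_iff, exists_prop]
  · rw [← exists_rowThree_entries_eq_zero_iff hq hq' hA hB n]
    constructor
    · rintro ⟨i, hi, hin, h⟩
      exact ⟨i, hi, hin, (single_rowThree_notMem_range_dMap_iff k q α β i hi hin).1 h⟩
    · rintro ⟨i, hi, hin, h⟩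
      exact ⟨⟨i, by omega⟩, hi, hin, (single_rowThree_notMem_range_dMap_iff k q α β _ hi hin).2 h⟩

/-- suppose `char k ≠ 2`, `α = ±q^s`, `β = ±q^t` with `s,t ∈ ℤ`,
`s ≠ 1`, `t ≠ −1`. Then `dₙ(eᵢ^{n−1}) = 0` for some `0 ≤ i ≤ n−1` if and only if
`s ≤ 0`, `t ≥ 0`, `α = (−1)^{t−s}q^s`, `β = (−1)^{t−s}q^t` and `n = t−s+1`; and
there exists `1 ≤ i ≤ n−1` with `yxeᵢⁿ ∉ Im dₙ` if and only if the same sign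
conditions hold and `n = t−s+2`. -/
theorem stmt14 (k : Type) [Field k] (q α β : k) (hq : q ≠ 0)
    (hq' : ∀ m : ℕ, 0 < m → q ^ m ≠ 1)
    (hchar : ringChar k ≠ 2) (s t : ℤ) (hs : s ≠ 1) (ht : t ≠ -1)
    (hA : α = q ^ s ∨ α = -(q ^ s)) (hB : β = q ^ t ∨ β = -(q ^ t))
    (n : ℕ) (hn : 1 ≤ n) :
    ((∃ i : Fin n, dMap k q α β n (Pi.single (i, (0 : Fin 4)) 1) = 0) ↔
      (s ≤ 0 ∧ 0 ≤ t ∧ α = (-1 : k) ^ (t - s) * q ^ s ∧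
        β = (-1 : k) ^ (t - s) * q ^ t ∧ (n : ℤ) = t - s + 1)) ∧
    ((∃ i : Fin (n + 1), 1 ≤ (i : ℕ) ∧ (i : ℕ) ≤ n - 1 ∧
        Pi.single (i, (3 : Fin 4)) (1 : k) ∉ LinearMap.range (dMap k q α β n)) ↔
      (s ≤ 0 ∧ 0 ≤ t ∧ α = (-1 : k) ^ (t - s) * q ^ s ∧
        β = (-1 : k) ^ (t - s) * q ^ t ∧ (n : ℤ) = t - s + 2)) :=
  stmt14_general k q α β hq hq' s t hA hB n
end

section
/- Let ψ be the automorphism of Λ with ψ(x) = q⁻¹x and ψ(y) = βy where β ∉ {±qⁱ : i ∈ ℤ}. Then Ext_{Λᵉ}ⁿ(Λ, ₁Λ_ψ) = 0 for all n > 0, while Ext_{Λᵉ}ⁿ(Λ, ₁Λ_{ψ⁻¹}) ≠ 0 for all n > 0 (its dimension is 1 if char k ≠ 2 and 2 if char k = 2). Since Ext_{Λᵉ}ⁿ(Λ, ₁Λ_{ψ⁻¹}) ≅ Ext_{Λᵉ}ⁿ(₁Λ_ψ, Λ), symmetry of Ext-vanishing fails over Λᵉ. (Equivalently, in terms of the explicit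 complexes: the complex for (α,β) = (q⁻¹, β) has Ker d_{n+1} = Im dₙ for all n ≥ 1, whereas the complex for (α,β) = (q, β⁻¹) has dim Ker d_{n+1} − dim Im dₙ ≥ 1 for all n ≥ 1.) -/
/-!
The differential `dₙ` sends `eᵢ ↦ a·xeᵢ + b·yeᵢ₊₁`, `xeᵢ ↦ c·yxeᵢ₊₁`, `yeᵢ ↦ e·yxeᵢ` and
`yxeᵢ ↦ 0`, with `a, b, c, e` the coefficients `eToX, eToY, xToYX, yToYX` below. When
`β ∉ ±q^ℤ` every `b` and `c` is nonzero, so the images of the `eᵢ` are linearly independent and,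
together with the `yxeⱼ` for `j ≥ 1`, they span the image of `dₙ` up to the single vector `yxe₀`,
which lies in it iff `e₀ = -q + (-1)ⁿα` is nonzero. Hence `rank dₙ = 2n + [e₀ ≠ 0]`, and the
claims follow from rank–nullity and `dₙ₊₁ ∘ dₙ = 0`: for `α = q⁻¹`, `e₀ = 0` would force
`q⁴ = 1`; for `α = q`, `e₀ = ((-1)ⁿ - 1)q` vanishes exactly for even `n`, and for every `n` in
characteristic `2`.
-/

open Submodule Module

section Coefficients

variable {k : Type} [Field k]

def eToX (q α : k) (n i : ℕ) : k := 1 + (-1 : k) ^ n * q ^ i * α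

def eToY (q β : k) (n i : ℕ) : k := q ^ (n - i - 1) + (-1 : k) ^ n * β

def xToYX (q β : k) (n i : ℕ) : k := q ^ (n - i - 1) + (-1 : k) ^ (n + 1) * q * β

def yToYX (q α : k) (n i : ℕ) : k := -q + (-1 : k) ^ n * q ^ i * α

variable {q b : k}

lemma eToY_ne_zero (hb : ¬∃ i : ℤ, b = q ^ i ∨ b = -(q ^ i)) (n i : ℕ) : eToY q b n i ≠ 0 := by
  intro h
  rcases neg_one_pow_eq_or k n with hs | hs <;> rw [eToY, hs] at h
  · exact hb ⟨_, .inr (by rw [zpow_natCast]; linear_combination h)⟩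
  · exact hb ⟨_, .inl (by rw [zpow_natCast]; linear_combination -h)⟩

lemma xToYX_ne_zero (hq : q ≠ 0) (hb : ¬∃ i : ℤ, b = q ^ i ∨ b = -(q ^ i)) (n i : ℕ) :
    xToYX q b n i ≠ 0 := by
  intro h
  set t := n - i - 1
  have ht : q ^ ((t : ℤ) - 1) = q ^ t / q := by rw [zpow_sub₀ hq, zpow_one, zpow_natCast]
  rcases neg_one_pow_eq_or k (n + 1) with hs | hs <;> rw [xToYX, hs] at h
  · refine hb ⟨t - 1, .inr ?_⟩
    rw [ht, ← neg_div, eq_div_iff hq]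
    linear_combination h
  · refine hb ⟨t - 1, .inl ?_⟩
    rw [ht, eq_div_iff hq]
    linear_combination -h

lemma not_exists_inv_eq_zpow (hb : ¬∃ i : ℤ, b = q ^ i ∨ b = -(q ^ i)) :
    ¬∃ i : ℤ, b⁻¹ = q ^ i ∨ b⁻¹ = -(q ^ i) := by
  rintro ⟨i, hi | hi⟩
  · exact hb ⟨-i, .inl (by rw [← inv_inv b, hi, zpow_neg])⟩
  · exact hb ⟨-i, .inr (by rw [← inv_inv b, hi, inv_neg, zpow_neg])⟩

lemma yToYX_inv_zero_ne_zero (hq : q ≠ 0) (hq4 : q ^ 4 ≠ 1) (n : ℕ) :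
    yToYX q q⁻¹ n 0 ≠ 0 := by
  intro h
  have hsq : q ^ 2 = (-1) ^ n := by
    rw [yToYX, pow_zero, mul_one] at h
    field_simp at h
    linear_combination -h
  apply hq4
  rw [show 4 = 2 * 2 by rfl, pow_mul, hsq, ← pow_mul, mul_comm, pow_mul, neg_one_sq, one_pow]

lemma yToYX_self_zero_eq_zero_iff (hq : q ≠ 0) (hk : ringChar k ≠ 2) (n : ℕ) :
    yToYX q q n 0 = 0 ↔ Even n := by
  rw [← neg_one_pow_eq_one_iff_even (Ring.neg_one_ne_one_of_char_ne_two hk), yToYX, pow_zero,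
    mul_one, neg_add_eq_zero, eq_comm, mul_eq_right₀ hq]

lemma yToYX_self_zero_of_ringChar_eq_two (hk : ringChar k = 2) (n : ℕ) :
    yToYX q q n 0 = 0 := by
  rw [yToYX, neg_one_eq_one_iff.2 hk]
  ring

end Coefficients

section Differential

open Matrix

variable {k : Type} [Field k] {q α β : k} {n : ℕ}

lemma dMap_single (p : Fin n × Fin 4) :
    dMap k q α β n (Pi.single p 1) = (Dmat k q α β n)ᵀ p :=
  mulVec_single_one _ p

lemma range_dMap : LinearMap.range (dMap k q α β n) =
    span k (Set.range fun p => dMap k q α β n (Pi.single p 1)) := by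
  simp only [dMap_single]
  exact range_mulVecLin _

lemma dMap_single_e (i : Fin n) : dMap k q α β n (Pi.single (i, 0) 1) =
    eToX q α n i • Pi.single (i.castSucc, 1) 1 + eToY q β n i • Pi.single (i.succ, 2) 1 := by
  rw [dMap_single]
  funext ⟨j, b⟩
  fin_cases b <;> simp [Dmat, eToX, eToY, Pi.single_apply, Prod.ext_iff, Fin.ext_iff]

lemma dMap_single_xe (i : Fin n) :
    dMap k q α β n (Pi.single (i, 1) 1) = xToYX q β n i • Pi.single (i.succ, 3) 1 := by
  rw [dMap_single]
  funext ⟨j, b⟩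
  fin_cases b <;> simp [Dmat, xToYX, Pi.single_apply, Prod.ext_iff, Fin.ext_iff]

lemma dMap_single_ye (i : Fin n) :
    dMap k q α β n (Pi.single (i, 2) 1) = yToYX q α n i • Pi.single (i.castSucc, 3) 1 := by
  rw [dMap_single]
  funext ⟨j, b⟩
  fin_cases b <;> simp [Dmat, yToYX, Pi.single_apply, Prod.ext_iff, Fin.ext_iff]

lemma dMap_single_yxe (i : Fin n) : dMap k q α β n (Pi.single (i, 3) 1) = 0 := by
  rw [dMap_single]
  funext ⟨j, b⟩
  fin_cases b <;> simp [Dmat]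

lemma eToX_mul_xToYX_add_eToY_mul_yToYX {i : ℕ} (h : i < n) :
    eToX q α n i * xToYX q β (n + 1) i + eToY q β n i * yToYX q α (n + 1) (i + 1) = 0 := by
  obtain ⟨d, rfl⟩ : ∃ d, n = i + 1 + d := ⟨n - i - 1, by omega⟩
  simp only [eToX, eToY, xToYX, yToYX,
    show i + 1 + d + 1 - i - 1 = d + 1 by omega, show i + 1 + d - i - 1 = d by omega]
  ring

lemma dMap_succ_comp_dMap : (dMap k q α β (n + 1)).comp (dMap k q α β n) = 0 := by
  refine Pi.basisFun k _ |>.ext fun ⟨i, a⟩ => ?_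
  simp only [Pi.basisFun_apply, LinearMap.comp_apply, LinearMap.zero_apply]
  fin_cases a <;> simp only [Fin.zero_eta, Fin.mk_one, Fin.reduceFinMk]
  · rw [dMap_single_e, map_add, map_smul, map_smul, dMap_single_xe, dMap_single_ye, smul_smul,
      smul_smul, Fin.succ_castSucc, ← add_smul]
    simp only [Fin.val_castSucc, Fin.val_succ, eToX_mul_xToYX_add_eToY_mul_yToYX i.isLt, zero_smul]
  · simp [dMap_single_xe, dMap_single_yxe]
  · simp [dMap_single_ye, dMap_single_yxe]
  · simp [dMap_single_yxe]

noncomputable def rangeFamily (q α β : k) (n : ℕ) :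
    Fin n ⊕ Fin (n + 1) → (Fin (n + 1) × Fin 4 → k) :=
  Sum.elim (fun i => dMap k q α β n (Pi.single (i, 0) 1)) fun j => Pi.single (j, 3) 1

lemma linearIndependent_rangeFamily (hB : ∀ i : Fin n, eToY q β n i ≠ 0) :
    LinearIndependent k (rangeFamily q α β n) := by
  rw [Fintype.linearIndependent_iff]
  intro g hg
  have hcoord (p) : ∑ s, g s * rangeFamily q α β n s p = 0 := by
    simpa using congrFun hg p
  have hyx (j : Fin (n + 1)) : g (Sum.inr j) = 0 := by
    simpa [rangeFamily, dMap_single_e, Fintype.sum_sum_type, Pi.single_apply] using hcoord (j, 3)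
  rintro (i | j)
  · simpa [rangeFamily, dMap_single_e, Fintype.sum_sum_type, Pi.single_apply, hyx, hB i]
      using hcoord (i.succ, 2)
  · exact hyx j

lemma range_dMap_le_span_rangeFamily :
    LinearMap.range (dMap k q α β n) ≤ span k (Set.range (rangeFamily q α β n)) := by
  rw [range_dMap, span_le]
  rintro _ ⟨⟨i, a⟩, rfl⟩
  have hyx (j : Fin (n + 1)) : Pi.single (j, 3) 1 ∈ span k (Set.range (rangeFamily q α β n)) :=
    subset_span ⟨Sum.inr j, rfl⟩
  fin_cases a <;> simp only [Fin.zero_eta, Fin.mk_one, Fin.reduceFinMk]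
  · exact subset_span ⟨Sum.inl i, rfl⟩
  · rw [dMap_single_xe]; exact smul_mem _ _ (hyx _)
  · rw [dMap_single_ye]; exact smul_mem _ _ (hyx _)
  · rw [dMap_single_yxe]; exact zero_mem _

lemma range_dMap_le_span_rangeFamily_succ (hE : yToYX q α n 0 = 0) :
    LinearMap.range (dMap k q α β n) ≤
      span k (Set.range (rangeFamily q α β n ∘ Sum.map id Fin.succ)) := by
  rw [range_dMap, span_le]
  rintro _ ⟨⟨i, a⟩, rfl⟩
  have hyx (j : Fin n) : Pi.single (j.succ, 3) 1 ∈
      span k (Set.range (rangeFamily q α β n ∘ Sum.map id Fin.succ)) :=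
    subset_span ⟨Sum.inr j, rfl⟩
  fin_cases a <;> simp only [Fin.zero_eta, Fin.mk_one, Fin.reduceFinMk]
  · exact subset_span ⟨Sum.inl i, rfl⟩
  · rw [dMap_single_xe]; exact smul_mem _ _ (hyx _)
  · rw [dMap_single_ye]
    obtain h | ⟨j, hj⟩ := Fin.eq_zero_or_eq_succ i.castSucc
    · rw [show (i : ℕ) = 0 by simpa [Fin.ext_iff] using h, hE, zero_smul]
      exact zero_mem _
    · rw [hj]; exact smul_mem _ _ (hyx _)
  · rw [dMap_single_yxe]; exact zero_mem _

lemma span_rangeFamily_succ_le_range_dMap (hC : ∀ i : Fin n, xToYX q β n i ≠ 0) :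
    span k (Set.range (rangeFamily q α β n ∘ Sum.map id Fin.succ)) ≤
      LinearMap.range (dMap k q α β n) := by
  rw [span_le]
  rintro _ ⟨i | j, rfl⟩
  · exact ⟨_, rfl⟩
  · refine ⟨(xToYX q β n j)⁻¹ • Pi.single (j, 1) 1, ?_⟩
    simp [dMap_single_xe, smul_smul, hC j, rangeFamily]

lemma range_dMap_eq_span_rangeFamily (hn : 0 < n) (hC : ∀ i : Fin n, xToYX q β n i ≠ 0)
    (hE : yToYX q α n 0 ≠ 0) :
    LinearMap.range (dMap k q α β n) = span k (Set.range (rangeFamily q α β n)) := by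
  refine le_antisymm range_dMap_le_span_rangeFamily (span_le.2 ?_)
  rintro _ ⟨s, rfl⟩
  obtain ⟨s, rfl⟩ | rfl : (∃ t, Sum.map id Fin.succ t = s) ∨ s = Sum.inr 0 := by
    rcases s with i | j
    · exact .inl ⟨.inl i, rfl⟩
    · rcases Fin.eq_zero_or_eq_succ j with rfl | ⟨j, rfl⟩
      exacts [.inr rfl, .inl ⟨.inr j, rfl⟩]
  · exact span_rangeFamily_succ_le_range_dMap hC (subset_span ⟨s, rfl⟩)
  · refine ⟨(yToYX q α n 0)⁻¹ • Pi.single (⟨0, hn⟩, 2) 1, ?_⟩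
    simp [dMap_single_ye, smul_smul, hE, rangeFamily]

open Classical in
lemma finrank_range_dMap_s19 (hn : 0 < n) (hB : ∀ i : Fin n, eToY q β n i ≠ 0)
    (hC : ∀ i : Fin n, xToYX q β n i ≠ 0) :
    finrank k (LinearMap.range (dMap k q α β n)) =
      2 * n + if yToYX q α n 0 = 0 then 0 else 1 := by
  split_ifs with hE
  · have hg : Function.Injective (Sum.map id Fin.succ : Fin n ⊕ Fin n → Fin n ⊕ Fin (n + 1)) :=
      Sum.map_injective.2 ⟨Function.injective_id, Fin.succ_injective _⟩
    rw [le_antisymm (range_dMap_le_span_rangeFamily_succ hE)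
        (span_rangeFamily_succ_le_range_dMap hC),
      finrank_span_eq_card ((linearIndependent_rangeFamily hB).comp _ hg)]
    simp [two_mul]
  · rw [range_dMap_eq_span_rangeFamily hn hC hE,
      finrank_span_eq_card (linearIndependent_rangeFamily hB), Fintype.card_sum, Fintype.card_fin,
      Fintype.card_fin]
    ring

lemma finrank_ker_dMap_add_finrank_range :
    finrank k (LinearMap.ker (dMap k q α β n)) + finrank k (LinearMap.range (dMap k q α β n)) =
      4 * n := by
  rw [add_comm, LinearMap.finrank_range_add_finrank_ker]
  simp [mul_comm]

end Differential

section Ranks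

variable {k : Type} [Field k] {q β : k} {n : ℕ}

lemma finrank_range_dMap_inv (hq : q ≠ 0) (hq4 : q ^ 4 ≠ 1)
    (hβ : ¬∃ i : ℤ, β = q ^ i ∨ β = -(q ^ i)) (hn : 0 < n) :
    finrank k (LinearMap.range (dMap k q q⁻¹ β n)) = 2 * n + 1 := by
  rw [finrank_range_dMap_s19 hn (fun i => eToY_ne_zero hβ n i) (fun i => xToYX_ne_zero hq hβ n i),
    if_neg (yToYX_inv_zero_ne_zero hq hq4 n)]

lemma finrank_range_dMap_self (hq : q ≠ 0) (hβ : ¬∃ i : ℤ, β = q ^ i ∨ β = -(q ^ i))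
    (hk : ringChar k ≠ 2) (hn : 0 < n) :
    finrank k (LinearMap.range (dMap k q q β n)) = 2 * n + n % 2 := by
  rw [finrank_range_dMap_s19 hn (fun i => eToY_ne_zero hβ n i) (fun i => xToYX_ne_zero hq hβ n i)]
  simp only [yToYX_self_zero_eq_zero_iff hq hk, Nat.even_iff]
  split_ifs <;> omega

lemma finrank_range_dMap_self_of_ringChar_eq_two (hq : q ≠ 0)
    (hβ : ¬∃ i : ℤ, β = q ^ i ∨ β = -(q ^ i)) (hk : ringChar k = 2) (hn : 0 < n) :
    finrank k (LinearMap.range (dMap k q q β n)) = 2 * n := by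
  rw [finrank_range_dMap_s19 hn (fun i => eToY_ne_zero hβ n i) (fun i => xToYX_ne_zero hq hβ n i),
    if_pos (yToYX_self_zero_of_ringChar_eq_two hk n), add_zero]

end Ranks

theorem stmt19_general (k : Type) [Field k] (q β : k) (hq : q ≠ 0)
    (hq' : ∀ m : ℕ, 0 < m → q ^ m ≠ 1)
    (hBetaSigma : ¬∃ i : ℤ, β = q ^ i ∨ β = -(q ^ i))
    (n : ℕ) (hn : 1 ≤ n) :
    LinearMap.ker (dMap k q q⁻¹ β (n + 1)) =
      LinearMap.range (dMap k q q⁻¹ β n) ∧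
    Module.finrank k ↥(LinearMap.ker (dMap k q q β⁻¹ (n + 1))) ≥
      Module.finrank k ↥(LinearMap.range (dMap k q q β⁻¹ n)) + 1 ∧
    (ringChar k ≠ 2 →
      Module.finrank k ↥(LinearMap.ker (dMap k q q β⁻¹ (n + 1))) =
        Module.finrank k ↥(LinearMap.range (dMap k q q β⁻¹ n)) + 1) ∧
    (ringChar k = 2 →
      Module.finrank k ↥(LinearMap.ker (dMap k q q β⁻¹ (n + 1))) =
        Module.finrank k ↥(LinearMap.range (dMap k q q β⁻¹ n)) + 2) := by
  have hq4 : q ^ 4 ≠ 1 := hq' 4 (by norm_num)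
  have hβinv := not_exists_inv_eq_zpow hBetaSigma
  have hker₁ := finrank_ker_dMap_add_finrank_range (q := q) (α := q⁻¹) (β := β) (n := n + 1)
  have hker₂ := finrank_ker_dMap_add_finrank_range (q := q) (α := q) (β := β⁻¹) (n := n + 1)
  have hrange₁ := finrank_range_dMap_inv hq hq4 hBetaSigma (n := n) (by omega)
  have hrange₁' := finrank_range_dMap_inv hq hq4 hBetaSigma (n := n + 1) (by omega)
  refine ⟨(eq_of_le_of_finrank_le (LinearMap.range_le_ker_iff.2 dMap_succ_comp_dMap)
    (by omega)).symm, ?_⟩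
  by_cases hk : ringChar k = 2
  · have hrange₂ := finrank_range_dMap_self_of_ringChar_eq_two hq hβinv hk (n := n) (by omega)
    have hrange₂' :=
      finrank_range_dMap_self_of_ringChar_eq_two hq hβinv hk (n := n + 1) (by omega)
    exact ⟨by omega, (absurd hk ·), fun _ => by omega⟩
  · have hrange₂ := finrank_range_dMap_self hq hβinv hk (n := n) (by omega)
    have hrange₂' := finrank_range_dMap_self hq hβinv hk (n := n + 1) (by omega)
    exact ⟨by omega, fun _ => by omega, (absurd · hk)⟩

/-- let `ψ(x) = q⁻¹x`, `ψ(y) = βy` with `β ∉ {±qⁱ : i ∈ ℤ}`. Then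
`Ext_{Λᵉ}ⁿ(Λ, ₁Λ_ψ) = 0` for all `n > 0`, while
`Ext_{Λᵉ}ⁿ(Λ, ₁Λ_{ψ⁻¹}) ≅ Ext_{Λᵉ}ⁿ(₁Λ_ψ, Λ)` is nonzero for all `n > 0`
(of dimension 1 if `char k ≠ 2` and 2 if `char k = 2`), so symmetry of
Ext-vanishing fails over `Λᵉ`. In terms of the explicit complexes: the complex
for `(α,β) = (q⁻¹, β)` has `Ker d_{n+1} = Im dₙ` for all `n ≥ 1`, whereas the
complex for `(α,β) = (q, β⁻¹)` (computing `Ext^*(Λ, ₁Λ_{ψ⁻¹})`) has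
`dim Ker d_{n+1} − dim Im dₙ ≥ 1` for all `n ≥ 1`. -/
theorem stmt19 (k : Type) [Field k] (q β : k) (hq : q ≠ 0)
    (hq' : ∀ m : ℕ, 0 < m → q ^ m ≠ 1) (hβ : β ≠ 0)
    (hBetaSigma : ¬∃ i : ℤ, β = q ^ i ∨ β = -(q ^ i))
    (n : ℕ) (hn : 1 ≤ n) :
    LinearMap.ker (dMap k q q⁻¹ β (n + 1)) =
      LinearMap.range (dMap k q q⁻¹ β n) ∧
    Module.finrank k ↥(LinearMap.ker (dMap k q q β⁻¹ (n + 1))) ≥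
      Module.finrank k ↥(LinearMap.range (dMap k q q β⁻¹ n)) + 1 ∧
    (ringChar k ≠ 2 →
      Module.finrank k ↥(LinearMap.ker (dMap k q q β⁻¹ (n + 1))) =
        Module.finrank k ↥(LinearMap.range (dMap k q q β⁻¹ n)) + 1) ∧
    (ringChar k = 2 →
      Module.finrank k ↥(LinearMap.ker (dMap k q q β⁻¹ (n + 1))) =
        Module.finrank k ↥(LinearMap.range (dMap k q q β⁻¹ n)) + 2) :=
  stmt19_general k q β hq hq' hBetaSigma n hn
end
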